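/- arXiv:math/0702549 — 6 statements merged into one kernel-verified Lean document; each statement's English description precedes it below -/
import Mathlib

section
/- Let r be an integer with 3 ≤ r ≤ 8, let E be a (−1)-class in ℤ^{r+1}, and let D ∈ ℤ^{r+1} satisfy B(D,E) = 0 and B(D,E') ≥ 0 for every (−1)-class E' with B(E,E') = 0. Then B(D,E') ≥ 0 for every (−1)-class E' (i.e., D is nef). -/
open scoped BigOperators
open MeasureTheory

/-- Intersection form on `ℤ^(n+1)` with basis `H, E₁, …, E_n`:
`B(x,y) = x₀y₀ - x₁y₁ - ⋯ - x_n y_n` (written as `2x₀y₀ - ∑ᵢ xᵢyᵢ`). -/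
def interZ {n : ℕ} (x y : Fin (n + 1) → ℤ) : ℤ :=
  2 * x 0 * y 0 - ∑ i, x i * y i

/-- The real intersection form on `ℝ^(n+1)`. -/
def interR {n : ℕ} (x y : Fin (n + 1) → ℝ) : ℝ :=
  2 * x 0 * y 0 - ∑ i, x i * y i

/-- The anticanonical class `-K = (3, -1, …, -1)`. -/
def antiK (n : ℕ) : Fin (n + 1) → ℤ := fun i => if i = 0 then 3 else -1

/-- The anticanonical class as a real vector. -/
def antiKR (n : ℕ) : Fin (n + 1) → ℝ := fun i => if i = 0 then 3 else -1

/-- A `(-1)`-class: `B(E,E) = -1` and `B(-K,E) = 1`. -/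
def IsMinusOneClass {n : ℕ} (E : Fin (n + 1) → ℤ) : Prop :=
  interZ E E = -1 ∧ interZ (antiK n) E = 1

/-- The nef cone: real vectors pairing nonnegatively with every `(-1)`-class. -/
def NefCone (n : ℕ) : Set (Fin (n + 1) → ℝ) :=
  {x | ∀ E : Fin (n + 1) → ℤ, IsMinusOneClass E → 0 ≤ interR (fun i => (E i : ℝ)) x}

section Aux
open Finset
variable {r : ℕ}

lemma inter_comm' (x y : Fin (r+1) → ℤ) : interZ x y = interZ y x := by
  unfold interZ
  rw [show (∑ i, x i * y i) = ∑ i, y i * x i from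
    Finset.sum_congr rfl (fun i _ => mul_comm _ _)]
  ring

lemma inter_add_left (x y z : Fin (r+1) → ℤ) :
    interZ (x + y) z = interZ x z + interZ y z := by
  unfold interZ
  simp only [Pi.add_apply, add_mul, Finset.sum_add_distrib]
  ring

lemma inter_smul_left (c : ℤ) (x y : Fin (r+1) → ℤ) :
    interZ (c • x) y = c * interZ x y := by
  unfold interZ
  simp only [Pi.smul_apply, smul_eq_mul, mul_assoc, ← Finset.mul_sum]
  ring

lemma inter_sub_left (x y z : Fin (r+1) → ℤ) :
    interZ (x - y) z = interZ x z - interZ y z := by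
  have h : x - y = x + (-1 : ℤ) • y := by ext i; simp; ring
  rw [h, inter_add_left, inter_smul_left]; ring

lemma inter_add_right (x y z : Fin (r+1) → ℤ) :
    interZ x (y + z) = interZ x y + interZ x z := by
  rw [inter_comm', inter_add_left, inter_comm' y x, inter_comm' z x]

lemma inter_smul_right (c : ℤ) (x y : Fin (r+1) → ℤ) :
    interZ x (c • y) = c * interZ x y := by
  rw [inter_comm', inter_smul_left, inter_comm' y x]

lemma inter_sub_right (x y z : Fin (r+1) → ℤ) :
    interZ x (y - z) = interZ x y - interZ x z := by
  rw [inter_comm', inter_sub_left, inter_comm' y x, inter_comm' z x]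

/-- unit class `E_j` -/
def ee (r : ℕ) (j : Fin (r+1)) : Fin (r+1) → ℤ := fun i => if i = j then 1 else 0

lemma inter_ee_right (x : Fin (r+1) → ℤ) {j : Fin (r+1)} (hj : j ≠ 0) :
    interZ x (ee r j) = -x j := by
  unfold interZ ee
  rw [show (∑ i, x i * if i = j then 1 else 0) = x j from by
    simp [mul_ite, Finset.sum_ite_eq']]
  rw [if_neg (Ne.symm hj)]
  ring

lemma inter_ee_left (x : Fin (r+1) → ℤ) {j : Fin (r+1)} (hj : j ≠ 0) :
    interZ (ee r j) x = -x j := by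
  rw [inter_comm', inter_ee_right x hj]

lemma isCls_ee {j : Fin (r+1)} (hj : j ≠ 0) : IsMinusOneClass (ee r j) := by
  constructor
  · rw [inter_ee_right _ hj]; simp [ee]
  · rw [inter_ee_right _ hj]; simp [antiK, hj]

end Aux

section Aux2
open Finset
variable {r : ℕ}

/-- Cremona root supported on `0,a,b,c`. -/
def cre (r : ℕ) (a b c : Fin (r+1)) : Fin (r+1) → ℤ :=
  fun i => if i = 0 then 1 else if i = a ∨ i = b ∨ i = c then -1 else 0

lemma inter_cre (x : Fin (r+1) → ℤ) {a b c : Fin (r+1)}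
    (ha : a ≠ 0) (hb : b ≠ 0) (hc : c ≠ 0)
    (hab : a ≠ b) (hac : a ≠ c) (hbc : b ≠ c) :
    interZ x (cre r a b c) = x 0 + x a + x b + x c := by
  unfold interZ
  have hT : (∑ i, x i * cre r a b c i)
      = ∑ i ∈ insert (0 : Fin (r+1)) (insert a (insert b {c})), x i * cre r a b c i := by
    refine (Finset.sum_subset (Finset.subset_univ _) ?_).symm
    intro i _ hi
    simp only [Finset.mem_insert, Finset.mem_singleton, not_or] at hi
    obtain ⟨h0, ha', hb', hc'⟩ := hi
    simp [cre, h0, ha', hb', hc']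
  rw [hT]
  rw [Finset.sum_insert (by simp [Ne.symm ha, Ne.symm hb, Ne.symm hc]),
      Finset.sum_insert (by simp [hab, hac]),
      Finset.sum_insert (by simp [hbc]), Finset.sum_singleton]
  simp only [cre, if_pos rfl, if_neg ha, if_neg hb, if_neg hc]
  simp [hab, hac, hbc, Ne.symm hab, Ne.symm hbc, Ne.symm hac]
  ring

lemma cre_root {a b c : Fin (r+1)}
    (ha : a ≠ 0) (hb : b ≠ 0) (hc : c ≠ 0)
    (hab : a ≠ b) (hac : a ≠ c) (hbc : b ≠ c) :
    interZ (cre r a b c) (cre r a b c) = -2 ∧ interZ (antiK r) (cre r a b c) = 0 := by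
  constructor
  · rw [inter_cre _ ha hb hc hab hac hbc]
    simp [cre, ha, hb, hc, hab, hac, hbc]
  · rw [inter_cre _ ha hb hc hab hac hbc]
    simp [antiK, ha, hb, hc]

lemma cre_coord_zero {a b c j : Fin (r+1)} (hj : j ≠ 0)
    (hja : j ≠ a) (hjb : j ≠ b) (hjc : j ≠ c) :
    cre r a b c j = 0 := by
  simp [cre, hj, hja, hjb, hjc]

/-- Reflection in a root. -/
def rflct (α x : Fin (r+1) → ℤ) : Fin (r+1) → ℤ := x + (interZ x α) • α

lemma inter_rflct {α : Fin (r+1) → ℤ} (hαα : interZ α α = -2) (x y : Fin (r+1) → ℤ) :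
    interZ (rflct α x) (rflct α y) = interZ x y := by
  unfold rflct
  simp only [inter_add_left, inter_add_right, inter_smul_left, inter_smul_right, hαα]
  rw [inter_comm' α y]
  ring

lemma rflct_deg {α : Fin (r+1) → ℤ} (hdeg : interZ (antiK r) α = 0) (x : Fin (r+1) → ℤ) :
    interZ (antiK r) (rflct α x) = interZ (antiK r) x := by
  unfold rflct
  simp only [inter_add_right, inter_smul_right, hdeg, mul_zero, add_zero]

lemma isCls_rflct {α : Fin (r+1) → ℤ} (hαα : interZ α α = -2)
    (hdeg : interZ (antiK r) α = 0) {x : Fin (r+1) → ℤ} (hx : IsMinusOneClass x) :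
    IsMinusOneClass (rflct α x) := by
  exact ⟨by rw [inter_rflct hαα]; exact hx.1, by rw [rflct_deg hdeg]; exact hx.2⟩

lemma rflct_inter_alpha {α : Fin (r+1) → ℤ} (hαα : interZ α α = -2) (x : Fin (r+1) → ℤ) :
    interZ (rflct α x) α = -interZ x α := by
  unfold rflct
  simp only [inter_add_left, inter_smul_left, hαα]
  ring

lemma rflct_rflct {α : Fin (r+1) → ℤ} (hαα : interZ α α = -2) (x : Fin (r+1) → ℤ) :
    rflct α (rflct α x) = x := by
  have h := rflct_inter_alpha hαα x
  show rflct α x + (interZ (rflct α x) α) • α = x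
  rw [h]
  show (x + (interZ x α) • α) + (-interZ x α) • α = x
  rw [neg_smul]
  abel

lemma rflct_swap {α : Fin (r+1) → ℤ} (hαα : interZ α α = -2) (x y : Fin (r+1) → ℤ) :
    interZ (rflct α x) y = interZ x (rflct α y) := by
  conv_lhs => rw [← rflct_rflct hαα y]
  rw [inter_rflct hαα]

lemma rflct_fix {α x : Fin (r+1) → ℤ} (h : interZ x α = 0) : rflct α x = x := by
  unfold rflct; rw [h, zero_smul, add_zero]

lemma rflct_coord {α : Fin (r+1) → ℤ} {j : Fin (r+1)} (hj : α j = 0) (x : Fin (r+1) → ℤ) :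
    rflct α x j = x j := by
  simp [rflct, hj]

lemma rflct_coord0 (α x : Fin (r+1) → ℤ) :
    rflct α x 0 = x 0 + interZ x α * α 0 := by
  simp [rflct]

end Aux2

section Aux3
open Finset
variable {r : ℕ}

lemma int_le_self_mul (z : ℤ) : z ≤ z * z := by
  rcases le_or_gt z 0 with h | h
  · exact le_trans h (mul_self_nonneg z)
  · nlinarith

lemma sum_split_one (g : Fin (r+1) → ℤ) :
    ∑ i, g i = g 0 + ∑ i ∈ Finset.univ.erase 0, g i := by
  rw [Finset.add_sum_erase _ g (Finset.mem_univ 0)]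

lemma sum_split_two {j : Fin (r+1)} (hj : j ≠ 0) (g : Fin (r+1) → ℤ) :
    ∑ i, g i = g 0 + g j + ∑ i ∈ (Finset.univ.erase 0).erase j, g i := by
  rw [sum_split_one g, ← Finset.add_sum_erase _ g (by simp [hj] : j ∈ Finset.univ.erase 0)]
  ring

lemma card_erase0 : (Finset.univ.erase (0 : Fin (r+1))).card = r := by
  rw [Finset.card_erase_of_mem (Finset.mem_univ 0), Finset.card_univ, Fintype.card_fin]
  omega

lemma card_erase0j {j : Fin (r+1)} (hj : j ≠ 0) :
    ((Finset.univ.erase (0 : Fin (r+1))).erase j).card = r - 1 := by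
  rw [Finset.card_erase_of_mem (by simp [hj]), card_erase0]

/-- Cauchy–Schwarz: `(∑ x)² ≤ card * ∑ x²` over an erase set. -/
lemma cauchy (s : Finset (Fin (r+1))) (g : Fin (r+1) → ℤ) :
    (∑ i ∈ s, g i) * (∑ i ∈ s, g i) ≤ (s.card : ℤ) * ∑ i ∈ s, g i * g i := by
  have h := sq_sum_le_card_mul_sum_sq (s := s) (f := g)
  simp only [pow_two] at h
  exact h

/-- Negative semidefiniteness on `K^⊥` for `r ≤ 8`. -/
lemma neg_def (h8 : r ≤ 8) (x : Fin (r+1) → ℤ)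
    (hdeg : interZ (antiK r) x = 0) :
    interZ x x ≤ 0 ∧ (interZ x x = 0 → x = 0) := by
  set s := Finset.univ.erase (0 : Fin (r+1)) with hs
  have hdeg' : 3 * x 0 + ∑ i ∈ s, x i = 0 := by
    have h := hdeg
    unfold interZ at h
    rw [sum_split_one (fun i => antiK r i * x i)] at h
    have h2 : ∑ i ∈ s, antiK r i * x i = -∑ i ∈ s, x i := by
      rw [← Finset.sum_neg_distrib]
      refine Finset.sum_congr rfl fun i hi => ?_
      have : i ≠ 0 := (Finset.mem_erase.mp hi).1
      simp [antiK, this]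
    rw [h2] at h
    norm_num [antiK] at h
    linarith
  have hBB : interZ x x = x 0 * x 0 - ∑ i ∈ s, x i * x i := by
    unfold interZ
    rw [sum_split_one (fun i => x i * x i)]
    ring
  have hC := cauchy s x
  have hcard : (s.card : ℤ) ≤ 8 := by
    rw [hs, card_erase0]; exact_mod_cast h8
  have hsqnn : 0 ≤ ∑ i ∈ s, x i * x i :=
    Finset.sum_nonneg fun i _ => mul_self_nonneg _
  have hC8 : (∑ i ∈ s, x i) * (∑ i ∈ s, x i) ≤ 8 * ∑ i ∈ s, x i * x i :=
    le_trans hC (mul_le_mul_of_nonneg_right hcard hsqnn)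
  have hsum : ∑ i ∈ s, x i = -3 * x 0 := by linarith
  rw [hsum] at hC8
  constructor
  · rw [hBB]; nlinarith
  · intro h0
    rw [hBB] at h0
    have hx0 : x 0 = 0 := by nlinarith
    have hsq0 : ∑ i ∈ s, x i * x i = 0 := by
      rw [hx0] at h0; linarith
    have hall : ∀ i ∈ s, x i * x i = 0 :=
      (Finset.sum_eq_zero_iff_of_nonneg (fun i _ => mul_self_nonneg _)).mp hsq0
    funext i
    rcases eq_or_ne i 0 with h | h
    · rw [h]; exact hx0
    · have := hall i (by simp [hs, h])
      exact mul_self_eq_zero.mp this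
end Aux3

section Aux4
open Finset
variable {r : ℕ}

lemma inter_antiK_antiK : interZ (antiK r) (antiK r) = 9 - r := by
  unfold interZ
  rw [sum_split_one (fun i => antiK r i * antiK r i)]
  have h : ∑ i ∈ Finset.univ.erase (0:Fin (r+1)), antiK r i * antiK r i
      = ∑ i ∈ Finset.univ.erase (0:Fin (r+1)), 1 := by
    refine Finset.sum_congr rfl fun i hi => ?_
    have : i ≠ 0 := (Finset.mem_erase.mp hi).1
    simp [antiK, this]
  rw [h]
  rw [Finset.sum_const, card_erase0]
  norm_num [antiK]
  ring

/-- two (-1)-classes pair `≥ -1`, with equality iff equal -/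
lemma inter_ge_neg_one (h8 : r ≤ 8) {E E' : Fin (r+1) → ℤ}
    (hE : IsMinusOneClass E) (hE' : IsMinusOneClass E') :
    -1 ≤ interZ E E' ∧ (interZ E E' = -1 → E = E') := by
  have hdeg : interZ (antiK r) (E - E') = 0 := by
    rw [inter_sub_right, hE.2, hE'.2]; ring
  have hBB : interZ (E - E') (E - E') = -2 - 2 * interZ E E' := by
    rw [inter_sub_left, inter_sub_right, inter_sub_right, hE.1, hE'.1,
      inter_comm' E' E]
    ring
  obtain ⟨hle, heq⟩ := neg_def h8 (E - E') hdeg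
  constructor
  · rw [hBB] at hle; linarith
  · intro h
    have : interZ (E - E') (E - E') = 0 := by rw [hBB, h]; ring
    have := heq this
    exact sub_eq_zero.mp this

lemma inter_upper (h8 : r ≤ 8) {E E' : Fin (r+1) → ℤ}
    (hE : IsMinusOneClass E) (hE' : IsMinusOneClass E') :
    ((9:ℤ) - r) * (interZ E E' - 1) ≤ 2 := by
  set a : ℤ := (9:ℤ) - r with ha
  have ha1 : 1 ≤ a := by
    have : (r:ℤ) ≤ 8 := by exact_mod_cast h8
    omega
  set x := a • (E + E') - (2:ℤ) • antiK r with hx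
  have hdeg : interZ (antiK r) x = 0 := by
    rw [hx, inter_sub_right, inter_smul_right, inter_smul_right,
      inter_add_right, hE.2, hE'.2, inter_antiK_antiK]
    ring
  have hBB : interZ x x = a * a * (2 * interZ E E' - 2) - 4 * a := by
    rw [hx]
    simp only [inter_sub_left, inter_sub_right, inter_add_left, inter_add_right,
      inter_smul_left, inter_smul_right]
    rw [hE.1, hE'.1, inter_comm' E' E, inter_antiK_antiK]
    rw [inter_comm' E (antiK r), inter_comm' E' (antiK r), hE.2, hE'.2]
    ring
  obtain ⟨hle, -⟩ := neg_def h8 x hdeg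
  rw [hBB] at hle
  nlinarith

/-- coordinates of a class away from 0 are `≤ 1`, with 1 only for the unit class -/
lemma cls_coord (h8 : r ≤ 8) {E : Fin (r+1) → ℤ} (hE : IsMinusOneClass E)
    {i : Fin (r+1)} (hi : i ≠ 0) :
    E i ≤ 1 ∧ (E i = 1 → E = ee r i) := by
  obtain ⟨hge, heq⟩ := inter_ge_neg_one h8 hE (isCls_ee hi)
  rw [inter_ee_right _ hi] at hge heq
  constructor
  · linarith
  · intro h; exact heq (by rw [h])

/-- degree bounds of a class -/
lemma cls_d (h8 : r ≤ 8) {E : Fin (r+1) → ℤ} (hE : IsMinusOneClass E) :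
    0 ≤ E 0 ∧ E 0 ≤ 7 := by
  set s := Finset.univ.erase (0 : Fin (r+1)) with hs
  set d := E 0 with hd
  have hsum : ∑ i ∈ s, E i = 1 - 3 * d := by
    have h := hE.2
    unfold interZ at h
    rw [sum_split_one (fun i => antiK r i * E i)] at h
    have h2 : ∑ i ∈ s, antiK r i * E i = -∑ i ∈ s, E i := by
      rw [← Finset.sum_neg_distrib]
      refine Finset.sum_congr rfl fun i hi => ?_
      have : i ≠ 0 := (Finset.mem_erase.mp hi).1
      simp [antiK, this]
    rw [h2] at h
    norm_num [antiK] at h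
    linarith
  have hsq : ∑ i ∈ s, E i * E i = d * d + 1 := by
    have h := hE.1
    unfold interZ at h
    rw [sum_split_one (fun i => E i * E i)] at h
    linarith
  have hC := cauchy s E
  have hcard : (s.card : ℤ) ≤ 8 := by
    rw [hs, card_erase0]; exact_mod_cast h8
  have hsqnn : 0 ≤ ∑ i ∈ s, E i * E i :=
    Finset.sum_nonneg fun i _ => mul_self_nonneg _
  have hC8 : (1 - 3*d) * (1 - 3*d) ≤ 8 * (d * d + 1) := by
    rw [hsum, hsq] at hC
    nlinarith
  have hle : ∑ i ∈ s, E i ≤ ∑ i ∈ s, E i * E i :=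
    Finset.sum_le_sum fun i _ => int_le_self_mul (E i)
  rw [hsum, hsq] at hle
  constructor
  · nlinarith
  · nlinarith

end Aux4

section Aux5
open Finset
variable {r : ℕ}

lemma extract (s : Finset (Fin (r+1))) (m : Fin (r+1) → ℤ)
    (h3 : 3 ≤ s.card) (h0 : ∀ i ∈ s, 0 ≤ m i) :
    ∃ a ∈ s, ∃ b ∈ s, ∃ c ∈ s, a ≠ b ∧ a ≠ c ∧ b ≠ c ∧
      m c ≤ m b ∧ m b ≤ m a ∧
      0 ≤ (∑ i ∈ s, m i) - (m a + m b + m c) ∧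
      (∑ i ∈ s, m i) - (m a + m b + m c) ≤ ((s.card : ℤ) - 3) * m c ∧
      (∑ i ∈ s, m i * m i) - (m a * m a + m b * m b + m c * m c)
        ≤ m c * ((∑ i ∈ s, m i) - (m a + m b + m c)) := by
  obtain ⟨a, ha, hamax⟩ := s.exists_max_image m (Finset.card_pos.mp (by omega))
  have hca : (s.erase a).card = s.card - 1 := Finset.card_erase_of_mem ha
  obtain ⟨b, hb, hbmax⟩ := (s.erase a).exists_max_image m (Finset.card_pos.mp (by omega))
  have hcb : ((s.erase a).erase b).card = s.card - 2 := by
    rw [Finset.card_erase_of_mem hb, hca]; omega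
  obtain ⟨c, hc, hcmax⟩ := ((s.erase a).erase b).exists_max_image m
    (Finset.card_pos.mp (by omega))
  set t := ((s.erase a).erase b).erase c with ht
  have hct : t.card = s.card - 3 := by
    rw [ht, Finset.card_erase_of_mem hc, hcb]; omega
  have hbs : b ∈ s := Finset.mem_of_mem_erase hb
  have hcs : c ∈ s := Finset.mem_of_mem_erase (Finset.mem_of_mem_erase hc)
  have hba : b ≠ a := (Finset.mem_erase.mp hb).1
  have hcb' : c ≠ b := (Finset.mem_erase.mp hc).1
  have hca' : c ≠ a := (Finset.mem_erase.mp (Finset.mem_of_mem_erase hc)).1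
  have htsub : ∀ l ∈ t, l ∈ s := fun l hl =>
    Finset.mem_of_mem_erase (Finset.mem_of_mem_erase (Finset.mem_of_mem_erase hl))
  have htc : ∀ l ∈ t, m l ≤ m c := fun l hl => hcmax l (Finset.mem_of_mem_erase hl)
  have htnn : ∀ l ∈ t, 0 ≤ m l := fun l hl => h0 l (htsub l hl)
  -- sum decomposition
  have hdec : ∀ g : Fin (r+1) → ℤ, ∑ i ∈ s, g i = g a + g b + g c + ∑ i ∈ t, g i := by
    intro g
    rw [← Finset.add_sum_erase s g ha, ← Finset.add_sum_erase _ g hb,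
      ← Finset.add_sum_erase _ g hc]
    ring
  have hsum := hdec m
  have hsq := hdec (fun i => m i * m i)
  have hrest_le : ∑ i ∈ t, m i ≤ ((s.card : ℤ) - 3) * m c := by
    have h := Finset.sum_le_card_nsmul t m (m c) htc
    rw [nsmul_eq_mul, hct] at h
    have : ((s.card - 3 : ℕ) : ℤ) = (s.card : ℤ) - 3 := by
      have : 3 ≤ s.card := h3
      push_cast [Nat.cast_sub this]
      ring
    rw [this] at h
    exact h
  have hrest_nn : 0 ≤ ∑ i ∈ t, m i := Finset.sum_nonneg htnn
  have hrest_sq : ∑ i ∈ t, m i * m i ≤ m c * ∑ i ∈ t, m i := by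
    rw [Finset.mul_sum]
    exact Finset.sum_le_sum fun l hl =>
      mul_le_mul_of_nonneg_right (htc l hl) (htnn l hl)
  have hmcb : m c ≤ m b := hbmax c (Finset.mem_of_mem_erase hc)
  have hmba : m b ≤ m a := hamax b hbs
  refine ⟨a, ha, b, hbs, c, hcs,
    Ne.symm hba, Ne.symm hca', Ne.symm hcb', hmcb, hmba, ?_, ?_, ?_⟩
  · rw [hsum]; linarith
  · rw [hsum]; linarith
  · rw [hsum, hsq]
    have := hrest_sq
    nlinarith [hrest_sq, hrest_nn]

end Aux5

section Aux6
open Finset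
variable {r : ℕ}

lemma tri_outer (s : Finset (Fin (r+1))) (m : Fin (r+1) → ℤ) (d : ℤ)
    (h0 : ∀ i ∈ s, 0 ≤ m i) (h3c : 3 ≤ s.card) (h8c : s.card ≤ 8)
    (hsum : ∑ i ∈ s, m i = 3 * d - 1)
    (hsq : ∑ i ∈ s, m i * m i = d * d + 1)
    (hd : 1 ≤ d) :
    ∃ a ∈ s, ∃ b ∈ s, ∃ c ∈ s, a ≠ b ∧ a ≠ c ∧ b ≠ c ∧ d + 1 ≤ m a + m b + m c := by
  obtain ⟨a, ha, b, hb, c, hc, hab, hac, hbc, hcb, hba, hnn, hR, hQ⟩ := extract s m h3c h0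
  refine ⟨a, ha, b, hb, c, hc, hab, hac, hbc, ?_⟩
  by_contra hcon
  push_neg at hcon
  rw [hsum] at hnn hR
  rw [hsum, hsq] at hQ
  have hcz : 0 ≤ m c := h0 c hc
  have hR5 : 3 * d - 1 - (m a + m b + m c) ≤ 5 * m c := by
    refine le_trans hR ?_
    have : ((s.card:ℤ) - 3) ≤ 5 := by
      have : (s.card:ℤ) ≤ 8 := by exact_mod_cast h8c
      omega
    nlinarith
  have key : ∀ x y z : ℤ, 0 ≤ z → z ≤ y → y ≤ x → x + y + z ≤ d →
      0 ≤ 3*d - 1 - (x+y+z) → 3*d - 1 - (x+y+z) ≤ 5*z →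
      d*d + 1 - (x*x + y*y + z*z) ≤ z * (3*d - 1 - (x+y+z)) → False := by
    intro x y z h1 h2 h3 h4 h5 h6 h7
    have hd3 : d ≤ 3 := by omega
    have hz1 : z ≤ 1 := by omega
    have hx3 : x ≤ 3 := by omega
    have hx0 : 0 ≤ x := by omega
    have hy0 : 0 ≤ y := by omega
    have hy3 : y ≤ 3 := by omega
    interval_cases d <;> interval_cases z <;> interval_cases x <;> interval_cases y <;> omega
  exact key (m a) (m b) (m c) hcz hcb hba (by omega) hnn hR5 hQ

lemma tri_conic (s : Finset (Fin (r+1))) (m : Fin (r+1) → ℤ) (d : ℤ)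
    (h0 : ∀ i ∈ s, 0 ≤ m i) (h3c : 3 ≤ s.card) (h7c : s.card ≤ 7)
    (hsum : ∑ i ∈ s, m i = 3 * d - 2)
    (hsq : ∑ i ∈ s, m i * m i = d * d)
    (hd : 2 ≤ d) :
    ∃ a ∈ s, ∃ b ∈ s, ∃ c ∈ s, a ≠ b ∧ a ≠ c ∧ b ≠ c ∧ d + 1 ≤ m a + m b + m c := by
  obtain ⟨a, ha, b, hb, c, hc, hab, hac, hbc, hcb, hba, hnn, hR, hQ⟩ := extract s m h3c h0
  refine ⟨a, ha, b, hb, c, hc, hab, hac, hbc, ?_⟩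
  by_contra hcon
  push_neg at hcon
  rw [hsum] at hnn hR
  rw [hsum, hsq] at hQ
  have hcz : 0 ≤ m c := h0 c hc
  have hR4 : 3 * d - 2 - (m a + m b + m c) ≤ 4 * m c := by
    refine le_trans hR ?_
    have : ((s.card:ℤ) - 3) ≤ 4 := by
      have : (s.card:ℤ) ≤ 7 := by exact_mod_cast h7c
      omega
    nlinarith
  have key : ∀ x y z : ℤ, 0 ≤ z → z ≤ y → y ≤ x → x + y + z ≤ d →
      0 ≤ 3*d - 2 - (x+y+z) → 3*d - 2 - (x+y+z) ≤ 4*z →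
      d*d - (x*x + y*y + z*z) ≤ z * (3*d - 2 - (x+y+z)) → False := by
    intro x y z h1 h2 h3 h4 h5 h6 h7
    have hd3 : d ≤ 3 := by omega
    have hz1 : z ≤ 1 := by omega
    have hx3 : x ≤ 3 := by omega
    have hx0 : 0 ≤ x := by omega
    have hy0 : 0 ≤ y := by omega
    have hy3 : y ≤ 3 := by omega
    interval_cases d <;> interval_cases z <;> interval_cases x <;> interval_cases y <;> omega
  exact key (m a) (m b) (m c) hcz hcb hba (by omega) hnn hR4 hQ

lemma tri_cubic (s : Finset (Fin (r+1))) (m : Fin (r+1) → ℤ) (d : ℤ)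
    (h0 : ∀ i ∈ s, 0 ≤ m i) (h3c : 3 ≤ s.card) (h7c : s.card ≤ 7)
    (hsum : ∑ i ∈ s, m i = 3 * d - 3)
    (hsq : ∑ i ∈ s, m i * m i = d * d - 3)
    (hd : 4 ≤ d) :
    ∃ a ∈ s, ∃ b ∈ s, ∃ c ∈ s, a ≠ b ∧ a ≠ c ∧ b ≠ c ∧ d + 1 ≤ m a + m b + m c := by
  obtain ⟨a, ha, b, hb, c, hc, hab, hac, hbc, hcb, hba, hnn, hR, hQ⟩ := extract s m h3c h0
  refine ⟨a, ha, b, hb, c, hc, hab, hac, hbc, ?_⟩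
  by_contra hcon
  push_neg at hcon
  rw [hsum] at hnn hR
  rw [hsum, hsq] at hQ
  have hcz : 0 ≤ m c := h0 c hc
  have hR4 : 3 * d - 3 - (m a + m b + m c) ≤ 4 * m c := by
    refine le_trans hR ?_
    have : ((s.card:ℤ) - 3) ≤ 4 := by
      have : (s.card:ℤ) ≤ 7 := by exact_mod_cast h7c
      omega
    nlinarith
  have key : ∀ x y z : ℤ, 0 ≤ z → z ≤ y → y ≤ x → x + y + z ≤ d →
      0 ≤ 3*d - 3 - (x+y+z) → 3*d - 3 - (x+y+z) ≤ 4*z →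
      d*d - 3 - (x*x + y*y + z*z) ≤ z * (3*d - 3 - (x+y+z)) → False := by
    intro x y z h1 h2 h3 h4 h5 h6 h7
    have hd4 : d ≤ 4 := by omega
    have hz1 : z ≤ 1 := by omega
    have hx4 : x ≤ 4 := by omega
    have hx0 : 0 ≤ x := by omega
    have hy0 : 0 ≤ y := by omega
    have hy4 : y ≤ 4 := by omega
    interval_cases d <;> interval_cases z <;> interval_cases x <;> interval_cases y <;> omega
  exact key (m a) (m b) (m c) hcz hcb hba (by omega) hnn hR4 hQ

end Aux6

section Aux7
open Finset
variable {r : ℕ}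

/-- The induction step: replace `E'` by `E'' = E' + e_j - e_a`. -/
lemma step_cls {j a : Fin (r+1)} (hj : j ≠ 0) (ha : a ≠ 0) (haj : a ≠ j)
    {E' : Fin (r+1) → ℤ} (hE' : IsMinusOneClass E') {k : ℤ}
    (hkj : interZ E' (ee r j) = k) (hka : interZ E' (ee r a) = k - 1) :
    IsMinusOneClass (E' + ee r j - ee r a) := by
  have hjj : interZ (ee r j) (ee r j) = -1 := (isCls_ee hj).1
  have haa : interZ (ee r a) (ee r a) = -1 := (isCls_ee ha).1
  have hja : interZ (ee r j) (ee r a) = 0 := by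
    rw [inter_ee_right _ ha]; simp [ee, haj]
  have haj' : interZ (ee r a) (ee r j) = 0 := by rw [inter_comm']; exact hja
  have hjE : interZ (ee r j) E' = k := by rw [inter_comm']; exact hkj
  have haE : interZ (ee r a) E' = k - 1 := by rw [inter_comm']; exact hka
  constructor
  · simp only [inter_add_left, inter_sub_left, inter_add_right, inter_sub_right]
    rw [hE'.1, hkj, hka, hjj, haa, hja, haj', hjE, haE]
    ring
  · simp only [inter_add_right, inter_sub_right]
    rw [hE'.2, (isCls_ee hj).2, (isCls_ee ha).2]
    ring

end Aux7


section Key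
open Finset
variable {r : ℕ}


/-- Induction hypothesis format for the key lemma. -/
def KeyIH (r : ℕ) (j : Fin (r+1)) (N : ℕ) : Prop :=
  ∀ M : ℕ, M < N → ∀ D : Fin (r+1) → ℤ, interZ D (ee r j) = 0 →
    (∀ G, IsMinusOneClass G → G j = 0 → 0 ≤ interZ D G) →
    ∀ F : Fin (r+1) → ℤ, IsMinusOneClass F →
      8 * (interZ (ee r j) F).toNat + (F 0).toNat ≤ M →
      0 ≤ interZ D F

/-- Step: subtract a unit class to decrease `k`. -/
lemma step_aux (h8 : r ≤ 8) {j : Fin (r+1)} (hj : j ≠ 0)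
    {D E' : Fin (r+1) → ℤ} (hE' : IsMinusOneClass E')
    {k d : ℤ} (hk : interZ (ee r j) E' = k) (hd : E' 0 = d)
    (hDj : interZ D (ee r j) = 0)
    (hD : ∀ G, IsMinusOneClass G → G j = 0 → 0 ≤ interZ D G)
    {N : ℕ} (IH : KeyIH r j N) (hμ : 8 * k.toNat + d.toNat ≤ N) (hk1 : 1 ≤ k)
    {a : Fin (r+1)} (ha0 : a ≠ 0) (haj : a ≠ j)
    (hka : interZ E' (ee r a) = k - 1) :
    0 ≤ interZ D E' := by
  have hkE : interZ E' (ee r j) = k := by rw [inter_comm']; exact hk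
  have hEj : E' j = -k := by
    have h := inter_ee_left E' hj
    rw [hk] at h; linarith
  have hcls'' := step_cls hj ha0 haj hE' hkE hka
  have hj'' : (E' + ee r j - ee r a) j = -(k-1) := by
    simp only [Pi.add_apply, Pi.sub_apply, ee, if_pos rfl, if_neg (Ne.symm haj), if_true]
    omega
  have hk'' : interZ (ee r j) (E' + ee r j - ee r a) = k - 1 := by
    rw [inter_ee_left _ hj, hj'']; ring
  have h0'' : (E' + ee r j - ee r a) 0 = d := by
    simp only [Pi.add_apply, Pi.sub_apply, ee, if_neg (Ne.symm hj), if_neg (Ne.symm ha0)]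
    omega
  have hres := IH (8 * (k-1).toNat + d.toNat) (by omega) D hDj hD _ hcls''
    (by rw [hk'', h0''])
  have h2 : 0 ≤ interZ D (ee r a) :=
    hD _ (isCls_ee ha0) (by simp [ee, Ne.symm haj])
  have hexp : interZ D (E' + ee r j - ee r a)
      = interZ D E' + interZ D (ee r j) - interZ D (ee r a) := by
    simp only [inter_add_right, inter_sub_right]
  linarith [hres, h2, hexp, hDj]

/-- Descent: reflect in a Cremona root to decrease the degree. -/
lemma desc_aux (h8 : r ≤ 8) {j : Fin (r+1)} (hj : j ≠ 0)
    {D E' : Fin (r+1) → ℤ} (hE' : IsMinusOneClass E')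
    {k d : ℤ} (hk : interZ (ee r j) E' = k) (hd : E' 0 = d)
    (hDj : interZ D (ee r j) = 0)
    (hD : ∀ G, IsMinusOneClass G → G j = 0 → 0 ≤ interZ D G)
    {N : ℕ} (IH : KeyIH r j N) (hμ : 8 * k.toNat + d.toNat ≤ N) (hk1 : 1 ≤ k)
    {a b c : Fin (r+1)} (ha0 : a ≠ 0) (haj : a ≠ j) (hb0 : b ≠ 0) (hbj : b ≠ j)
    (hc0 : c ≠ 0) (hcj : c ≠ j) (hab : a ≠ b) (hac : a ≠ c) (hbc : b ≠ c)
    (htri : d + 1 ≤ -E' a + -E' b + -E' c) :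
    0 ≤ interZ D E' := by
  have hEj : E' j = -k := by
    have h := inter_ee_left E' hj
    rw [hk] at h; linarith
  obtain ⟨hαα, hαdeg⟩ := cre_root (r := r) ha0 hb0 hc0 hab hac hbc
  have hαj : cre r a b c j = 0 :=
    cre_coord_zero hj (Ne.symm haj) (Ne.symm hbj) (Ne.symm hcj)
  have hEαneg : interZ E' (cre r a b c) ≤ -1 := by
    rw [inter_cre _ ha0 hb0 hc0 hab hac hbc, hd]
    omega
  have hE₂cls : IsMinusOneClass (rflct (cre r a b c) E') := isCls_rflct hαα hαdeg hE'
  have hE₂j : rflct (cre r a b c) E' j = E' j := rflct_coord hαj E'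
  have hα0 : cre r a b c 0 = 1 := by simp [cre]
  have hE₂0 : rflct (cre r a b c) E' 0 = d + interZ E' (cre r a b c) := by
    rw [rflct_coord0, hα0, hd]; ring
  have hE₂0nn : 0 ≤ rflct (cre r a b c) E' 0 := (cls_d h8 hE₂cls).1
  have hkE₂ : interZ (ee r j) (rflct (cre r a b c) E') = k := by
    rw [inter_ee_left _ hj, hE₂j, hEj]; ring
  have hfix : interZ (ee r j) (cre r a b c) = 0 := by
    rw [inter_cre _ ha0 hb0 hc0 hab hac hbc]
    simp [ee, Ne.symm hj, haj, hbj, hcj]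
  have hD₂j : interZ (rflct (cre r a b c) D) (ee r j) = 0 := by
    rw [rflct_swap hαα, rflct_fix hfix]
    exact hDj
  have hD₂hyp : ∀ G, IsMinusOneClass G → G j = 0 →
      0 ≤ interZ (rflct (cre r a b c) D) G := by
    intro G hG hGj
    rw [rflct_swap hαα]
    exact hD _ (isCls_rflct hαα hαdeg hG) (by rw [rflct_coord hαj]; exact hGj)
  rw [hE₂0] at hE₂0nn
  have hres := IH (8 * k.toNat + (d + interZ E' (cre r a b c)).toNat) (by omega)
    (rflct (cre r a b c) D) hD₂j hD₂hyp _ hE₂cls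
    (by rw [hkE₂, hE₂0])
  rw [inter_rflct hαα] at hres
  exact hres

/-- The slots other than `0` and `j`. -/
def sset (r : ℕ) (j : Fin (r+1)) : Finset (Fin (r+1)) :=
  (Finset.univ.erase 0).erase j

lemma mem_sset {j i : Fin (r+1)} : i ∈ sset r j ↔ i ≠ 0 ∧ i ≠ j := by
  simp only [sset, Finset.mem_erase, Finset.mem_univ, and_true]
  tauto

lemma card_sset {j : Fin (r+1)} (hj : j ≠ 0) : (sset r j).card = r - 1 :=
  card_erase0j hj

set_option maxHeartbeats 1000000 in
lemma key_lemma (h3 : 3 ≤ r) (h8 : r ≤ 8) {j : Fin (r+1)} (hj : j ≠ 0) :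
    ∀ N : ℕ, ∀ D : Fin (r+1) → ℤ, interZ D (ee r j) = 0 →
      (∀ G, IsMinusOneClass G → G j = 0 → 0 ≤ interZ D G) →
      ∀ E' : Fin (r+1) → ℤ, IsMinusOneClass E' →
        8 * (interZ (ee r j) E').toNat + (E' 0).toNat ≤ N →
        0 ≤ interZ D E' := by
  intro N
  induction N using Nat.strong_induction_on with
  | _ N IH =>
  have IH' : KeyIH r j N := by
    intro M hM
    exact IH M hM
  intro D hDj hD E' hE' hμ
  obtain ⟨k, hk⟩ : ∃ k, interZ (ee r j) E' = k := ⟨_, rfl⟩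
  obtain ⟨d, hd⟩ : ∃ dd, E' 0 = dd := ⟨_, rfl⟩
  rw [hk, hd] at hμ
  have hclsj := isCls_ee (r := r) hj
  have hkE : interZ E' (ee r j) = k := by rw [inter_comm']; exact hk
  have hEj : E' j = -k := by
    have h := inter_ee_left E' hj
    rw [hk] at h; linarith
  by_cases hk1 : 1 ≤ k
  case neg =>
    have hk0 : k ≤ 0 := by omega
    rcases eq_or_lt_of_le hk0 with h0 | hlt
    · exact hD E' hE' (by omega)
    · obtain ⟨hge, heq⟩ := inter_ge_neg_one h8 hclsj hE'
      rw [hk] at hge heq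
      have hEeq : ee r j = E' := heq (by omega)
      rw [← hEeq, hDj]
  case pos =>
  have hr8 : (r:ℤ) ≤ 8 := by exact_mod_cast h8
  have hr3 : (3:ℤ) ≤ r := by exact_mod_cast h3
  have hup := inter_upper h8 hclsj hE'
  rw [hk] at hup
  have h9r : (1:ℤ) ≤ 9 - r := by omega
  have hk3 : k ≤ 3 := by nlinarith
  obtain ⟨hd0, hd7⟩ := cls_d h8 hE'
  rw [hd] at hd0 hd7
  -- non-`j` coordinates are `≤ 0`
  have hneg : ∀ i : Fin (r+1), i ≠ 0 → i ≠ j → E' i ≤ 0 := by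
    intro i hi0 hij
    obtain ⟨h1, h2⟩ := cls_coord h8 hE' hi0
    by_contra hcon
    push_neg at hcon
    have hEi : E' i = 1 := by omega
    have hEq := h2 hEi
    rw [hEq] at hk
    rw [inter_ee_left _ hj] at hk
    simp [ee, Ne.symm hij] at hk
    omega
  have hm0 : ∀ i ∈ sset r j, 0 ≤ -E' i := by
    intro i hi
    obtain ⟨h1, h2⟩ := mem_sset.mp hi
    have := hneg i h1 h2
    linarith
  have hcard' : (sset r j).card = r - 1 := card_sset hj
  -- sum facts over the remaining slots
  have hcongr : ∑ i ∈ sset r j, antiK r i * E' i = ∑ i ∈ sset r j, -E' i := by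
    refine Finset.sum_congr rfl fun i hi => ?_
    obtain ⟨h1, _⟩ := mem_sset.mp hi
    simp [antiK, h1]
  have hsum' : ∑ i ∈ sset r j, -E' i = 3*d - 1 - k := by
    have h := hE'.2
    unfold interZ at h
    rw [sum_split_two hj (fun i => antiK r i * E' i)] at h
    rw [show (Finset.univ.erase (0:Fin (r+1))).erase j = sset r j from rfl] at h
    rw [hcongr] at h
    norm_num [antiK, hj] at h
    rw [hEj, hd] at h
    rw [Finset.sum_neg_distrib]
    linarith
  have hsq' : ∑ i ∈ sset r j, (-E' i) * (-E' i) = d*d + 1 - k*k := by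
    have h := hE'.1
    unfold interZ at h
    rw [sum_split_two hj (fun i => E' i * E' i)] at h
    rw [show (Finset.univ.erase (0:Fin (r+1))).erase j = sset r j from rfl] at h
    rw [hEj, hd] at h
    have hc2 : ∑ i ∈ sset r j, E' i * E' i = ∑ i ∈ sset r j, (-E' i) * (-E' i) := by
      refine Finset.sum_congr rfl fun i hi => by ring
    rw [hc2] at h
    nlinarith [h]
  have hk123 : k = 1 ∨ k = 2 ∨ k = 3 := by omega
  rcases hk123 with h1 | h2 | h3
  · -- k = 1
    subst h1
    have hsum1 : ∑ i ∈ sset r j, -E' i = 3*d - 2 := by rw [hsum']; ring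
    have hsq1 : ∑ i ∈ sset r j, (-E' i) * (-E' i) = d*d := by rw [hsq']; ring
    by_cases hdle : d ≤ 1
    · -- base case: E' + e_j is (up to a unit) a line
      have hd1 : d = 1 := by
        have hnn : 0 ≤ ∑ i ∈ sset r j, -E' i := Finset.sum_nonneg hm0
        rw [hsum1] at hnn
        omega
      have hex : ∃ b ∈ sset r j, -E' b = 0 := by
        by_contra hcon
        push_neg at hcon
        have hone : ∀ i ∈ sset r j, (1:ℤ) ≤ -E' i := by
          intro i hi
          have := hm0 i hi
          have := hcon i hi
          omega
        have h2 := Finset.card_nsmul_le_sum (sset r j) (fun i => -E' i) 1 hone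
        rw [nsmul_eq_mul, mul_one, hcard', hsum1] at h2
        have hcast : ((r-1:ℕ):ℤ) = (r:ℤ) - 1 := by
          push_cast [Nat.cast_sub (by omega : 1 ≤ r)]
          ring
        rw [hcast] at h2
        omega
      obtain ⟨b, hbs, hmb⟩ := hex
      obtain ⟨hb0, hbj⟩ := mem_sset.mp hbs
      exact step_aux h8 hj hE' hk hd hDj hD IH' hμ (by norm_num) hb0 hbj
        (by rw [inter_ee_right _ hb0]; omega)
    · -- descent
      rcases le_or_gt r 3 with hr3' | hr4
      · exfalso
        have hC := cauchy (sset r j) (fun i => -E' i)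
        simp only [hsum1, hsq1, hcard'] at hC
        have hreq : r = 3 := by omega
        subst hreq
        norm_num at hC
        nlinarith [hC, sq_nonneg (d-2)]
      · obtain ⟨a, has, b, hbs, c, hcs, hab, hac, hbc, htri⟩ :=
          tri_conic (sset r j) (fun i => -E' i) d hm0
            (by rw [hcard']; omega) (by rw [hcard']; omega) hsum1 hsq1 (by omega)
        obtain ⟨ha0, haj⟩ := mem_sset.mp has
        obtain ⟨hb0, hbj⟩ := mem_sset.mp hbs
        obtain ⟨hc0, hcj⟩ := mem_sset.mp hcs
        exact desc_aux h8 hj hE' hk hd hDj hD IH' hμ (by norm_num)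
          ha0 haj hb0 hbj hc0 hcj hab hac hbc htri
  · -- k = 2
    subst h2
    have hr7 : (7:ℤ) ≤ r := by nlinarith [hup]
    have hsum2 : ∑ i ∈ sset r j, -E' i = 3*d - 3 := by rw [hsum']; ring
    have hsq2 : ∑ i ∈ sset r j, (-E' i) * (-E' i) = d*d - 3 := by rw [hsq']; ring
    by_cases hd4 : 4 ≤ d
    · -- descent
      have hr7' : 7 ≤ r := by exact_mod_cast hr7
      obtain ⟨a, has, b, hbs, c, hcs, hab, hac, hbc, htri⟩ :=
        tri_cubic (sset r j) (fun i => -E' i) d hm0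
          (by rw [hcard']; omega) (by rw [hcard']; omega) hsum2 hsq2 hd4
      obtain ⟨ha0, haj⟩ := mem_sset.mp has
      obtain ⟨hb0, hbj⟩ := mem_sset.mp hbs
      obtain ⟨hc0, hcj⟩ := mem_sset.mp hcs
      exact desc_aux h8 hj hE' hk hd hDj hD IH' hμ (by norm_num)
        ha0 haj hb0 hbj hc0 hcj hab hac hbc htri
    · -- base : forced d = 3, coordinates in {0,1}
      have hQnn : 0 ≤ ∑ i ∈ sset r j, (-E' i) * (-E' i) :=
        Finset.sum_nonneg fun i hi => mul_nonneg (hm0 i hi) (hm0 i hi)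
      rw [hsq2] at hQnn
      have hd2 : 2 ≤ d := by nlinarith
      have hmm1 : 0 ≤ ∑ i ∈ sset r j, ((-E' i) * (-E' i) - (-E' i)) :=
        Finset.sum_nonneg fun i hi => by
          have := int_le_self_mul (-E' i); linarith
      rw [Finset.sum_sub_distrib, hsq2, hsum2] at hmm1
      have hd3' : 3 ≤ d := by nlinarith
      have hd3 : d = 3 := by omega
      have hzero : ∀ i ∈ sset r j, (-E' i) * (-E' i) - (-E' i) = 0 := by
        apply (Finset.sum_eq_zero_iff_of_nonneg ?_).mp
        · rw [Finset.sum_sub_distrib, hsq2, hsum2, hd3]; ring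
        · intro i hi
          have := int_le_self_mul (-E' i); linarith
      have hex : ∃ a ∈ sset r j, -E' a ≠ 0 := by
        apply Finset.exists_ne_zero_of_sum_ne_zero (f := fun i => -E' i)
        rw [hsum2, hd3]; norm_num
      obtain ⟨a, has, hane⟩ := hex
      obtain ⟨ha0, haj⟩ := mem_sset.mp has
      have hfac : (-E' a) * (-E' a - 1) = 0 := by
        have h := hzero a has
        ring_nf
        ring_nf at h
        linarith
      have hma : -E' a = 1 := by
        rcases mul_eq_zero.mp hfac with h | h
        · exact absurd h hane
        · linarith
      exact step_aux h8 hj hE' hk hd hDj hD IH' hμ (by norm_num) ha0 haj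
        (by rw [inter_ee_right _ ha0]; omega)
  · -- k = 3 : forced r = 8 and E' = 2(-K) - e_j
    subst h3
    have hr8'' : (8:ℤ) ≤ r := by nlinarith [hup]
    have h9r1 : (9:ℤ) - r = 1 := by omega
    have hEK : interZ E' (antiK r) = 1 := by rw [inter_comm']; exact hE'.2
    have hjK : interZ (ee r j) (antiK r) = 1 := by rw [inter_comm']; exact hclsj.2
    have hdegX : interZ (antiK r) (E' + ee r j - (2:ℤ) • antiK r) = 0 := by
      simp only [inter_add_right, inter_sub_right, inter_smul_right]
      rw [hE'.2, hclsj.2, inter_antiK_antiK, h9r1]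
      ring
    have hXX : interZ (E' + ee r j - (2:ℤ) • antiK r)
        (E' + ee r j - (2:ℤ) • antiK r) = 0 := by
      simp only [inter_add_left, inter_add_right, inter_sub_left, inter_sub_right,
        inter_smul_left, inter_smul_right]
      rw [hE'.1, hkE, hk, hEK, hjK, hE'.2, hclsj.1, hclsj.2, inter_antiK_antiK, h9r1]
      ring
    have hX0 := (neg_def h8 _ hdegX).2 hXX
    have hsne : (sset r j).Nonempty := Finset.card_pos.mp (by rw [hcard']; omega)
    obtain ⟨a, has⟩ := hsne
    obtain ⟨ha0, haj⟩ := mem_sset.mp has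
    have hEa : E' a = -2 := by
      have h := congrFun hX0 a
      simp only [Pi.add_apply, Pi.sub_apply, Pi.smul_apply, Pi.zero_apply,
        smul_eq_mul] at h
      rw [show ee r j a = 0 from by simp [ee, haj],
        show antiK r a = -1 from by simp [antiK, ha0]] at h
      linarith
    exact step_aux h8 hj hE' hk hd hDj hD IH' hμ (by norm_num) ha0 haj
      (by rw [inter_ee_right _ ha0, hEa]; norm_num)

end Key

section Outer
open Finset
variable {r : ℕ}

set_option maxHeartbeats 1000000 in
lemma outer_lemma (h3 : 3 ≤ r) (h8 : r ≤ 8) :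
    ∀ N : ℕ, ∀ E D : Fin (r+1) → ℤ, IsMinusOneClass E → (E 0).toNat ≤ N →
      interZ D E = 0 →
      (∀ G, IsMinusOneClass G → interZ E G = 0 → 0 ≤ interZ D G) →
      ∀ E', IsMinusOneClass E' → 0 ≤ interZ D E' := by
  intro N
  induction N using Nat.strong_induction_on with
  | _ N IH =>
  intro E D hE hEN hDE hD E' hE'
  obtain ⟨hd0, hd7⟩ := cls_d h8 hE
  have hsum : ∑ i ∈ Finset.univ.erase (0:Fin (r+1)), -E i = 3 * E 0 - 1 := by
    have hK0 : antiK r 0 = 3 := by norm_num [antiK]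
    have h := hE.2
    unfold interZ at h
    rw [sum_split_one (fun i => antiK r i * E i)] at h
    have hc : ∑ i ∈ Finset.univ.erase (0:Fin (r+1)), antiK r i * E i
        = ∑ i ∈ Finset.univ.erase (0:Fin (r+1)), -E i := by
      refine Finset.sum_congr rfl fun i hi => ?_
      have : i ≠ 0 := (Finset.mem_erase.mp hi).1
      simp [antiK, this]
    rw [hc, hK0] at h
    linarith
  have hsq : ∑ i ∈ Finset.univ.erase (0:Fin (r+1)), (-E i) * (-E i)
      = E 0 * E 0 + 1 := by
    have h := hE.1
    unfold interZ at h
    rw [sum_split_one (fun i => E i * E i)] at h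
    have hc : ∑ i ∈ Finset.univ.erase (0:Fin (r+1)), E i * E i
        = ∑ i ∈ Finset.univ.erase (0:Fin (r+1)), (-E i) * (-E i) := by
      refine Finset.sum_congr rfl fun i hi => by ring
    rw [hc] at h
    linarith
  by_cases hE0 : E 0 = 0
  · -- base case : E is a unit class
    have hsum0 : ∑ i ∈ Finset.univ.erase (0:Fin (r+1)), E i = 1 := by
      rw [Finset.sum_neg_distrib] at hsum
      rw [hE0] at hsum
      linarith
    have hzero : ∀ i ∈ Finset.univ.erase (0:Fin (r+1)), E i * E i - E i = 0 := by
      apply (Finset.sum_eq_zero_iff_of_nonneg ?_).mp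
      · rw [Finset.sum_sub_distrib, hsum0]
        have hc : ∑ i ∈ Finset.univ.erase (0:Fin (r+1)), E i * E i = 1 := by
          have hc2 : ∑ i ∈ Finset.univ.erase (0:Fin (r+1)), (-E i) * (-E i)
              = ∑ i ∈ Finset.univ.erase (0:Fin (r+1)), E i * E i := by
            refine Finset.sum_congr rfl fun i hi => by ring
          rw [hc2] at hsq
          rw [hsq, hE0]; ring
        rw [hc]; ring
      · intro i hi
        have := int_le_self_mul (E i); linarith
    have hex : ∃ j ∈ Finset.univ.erase (0:Fin (r+1)), E j ≠ 0 := by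
      apply Finset.exists_ne_zero_of_sum_ne_zero (f := fun i => E i)
      rw [hsum0]; norm_num
    obtain ⟨j, hjs, hjne⟩ := hex
    have hj0 : j ≠ 0 := (Finset.mem_erase.mp hjs).1
    have hEj1 : E j = 1 := by
      have h := hzero j hjs
      have hfac : E j * (E j - 1) = 0 := by ring_nf; ring_nf at h; linarith
      rcases mul_eq_zero.mp hfac with h' | h'
      · exact absurd h' hjne
      · linarith
    have hEeq : E = ee r j := (cls_coord h8 hE hj0).2 hEj1
    refine key_lemma h3 h8 hj0 (8 * (interZ (ee r j) E').toNat + (E' 0).toNat) D ?_ ?_ E' hE' le_rfl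
    · rw [← hEeq]; exact hDE
    · intro G hG hGj
      refine hD G hG ?_
      rw [hEeq, inter_ee_left _ hj0, hGj]
      ring
  · -- descent
    have hd1 : 1 ≤ E 0 := by omega
    have hneg : ∀ i : Fin (r+1), i ≠ 0 → E i ≤ 0 := by
      intro i hi0
      obtain ⟨h1, h2⟩ := cls_coord h8 hE hi0
      by_contra hcon
      push_neg at hcon
      have hEi : E i = 1 := by omega
      have hEq := h2 hEi
      rw [hEq] at hE0
      simp [ee, Ne.symm hi0] at hE0
    have hm0 : ∀ i ∈ Finset.univ.erase (0:Fin (r+1)), 0 ≤ -E i := by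
      intro i hi
      have := hneg i (Finset.mem_erase.mp hi).1
      linarith
    obtain ⟨a, has, b, hbs, c, hcs, hab, hac, hbc, htri⟩ :=
      tri_outer (Finset.univ.erase (0:Fin (r+1))) (fun i => -E i) (E 0) hm0
        (by rw [card_erase0]; omega) (by rw [card_erase0]; omega) hsum hsq hd1
    have ha0 : a ≠ 0 := (Finset.mem_erase.mp has).1
    have hb0 : b ≠ 0 := (Finset.mem_erase.mp hbs).1
    have hc0 : c ≠ 0 := (Finset.mem_erase.mp hcs).1
    obtain ⟨hαα, hαdeg⟩ := cre_root (r := r) ha0 hb0 hc0 hab hac hbc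
    have hEαneg : interZ E (cre r a b c) ≤ -1 := by
      rw [inter_cre _ ha0 hb0 hc0 hab hac hbc]
      omega
    have hα0 : cre r a b c 0 = 1 := by simp [cre]
    have hE₂cls : IsMinusOneClass (rflct (cre r a b c) E) := isCls_rflct hαα hαdeg hE
    have hE₂0 : rflct (cre r a b c) E 0 = E 0 + interZ E (cre r a b c) := by
      rw [rflct_coord0, hα0]; ring
    have hE₂0nn : 0 ≤ rflct (cre r a b c) E 0 := (cls_d h8 hE₂cls).1
    rw [hE₂0] at hE₂0nn
    have hD₂E₂ : interZ (rflct (cre r a b c) D) (rflct (cre r a b c) E) = 0 := by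
      rw [inter_rflct hαα]; exact hDE
    have hD₂ : ∀ G, IsMinusOneClass G → interZ (rflct (cre r a b c) E) G = 0 →
        0 ≤ interZ (rflct (cre r a b c) D) G := by
      intro G hG hGE
      rw [rflct_swap hαα]
      refine hD _ (isCls_rflct hαα hαdeg hG) ?_
      rw [← rflct_swap hαα]
      exact hGE
    have hres := IH ((rflct (cre r a b c) E 0).toNat)
      (by rw [hE₂0]; omega)
      (rflct (cre r a b c) E) (rflct (cre r a b c) D) hE₂cls le_rfl hD₂E₂ hD₂
      (rflct (cre r a b c) E') (isCls_rflct hαα hαdeg hE')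
    rw [inter_rflct hαα] at hres
    exact hres

end Outer


theorem nef_of_orthogonal_minusOne (r : ℕ) (h3 : 3 ≤ r) (h8 : r ≤ 8)
    (E : Fin (r + 1) → ℤ) (hE : IsMinusOneClass E)
    (D : Fin (r + 1) → ℤ) (hDE : interZ D E = 0)
    (hD : ∀ E' : Fin (r + 1) → ℤ, IsMinusOneClass E' → interZ E E' = 0 →
      0 ≤ interZ D E') :
    ∀ E' : Fin (r + 1) → ℤ, IsMinusOneClass E' → 0 ≤ interZ D E' := by
  intro E' hE'
  exact outer_lemma h3 h8 ((E 0).toNat) E D hE le_rfl hDE hD E' hE'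
end

section
/- Let r be an integer with 2 ≤ r ≤ 8 and let E ≠ E' be two distinct (−1)-classes in ℤ^{r+1}. Then 0 ≤ B(E,E'); moreover B(E,E') ≤ 1 if r ≤ 6, B(E,E') ≤ 2 if r = 7, and B(E,E') ≤ 3 if r = 8. -/
open scoped BigOperators
open MeasureTheory

-- expansion of interZ on linear combinations of three vectors
lemma interZ_comb3 {n : ℕ} (c1 c2 c3 d1 d2 d3 : ℤ) (u v w : Fin (n+1) → ℤ) :
    interZ (fun i => c1*u i + c2*v i + c3*w i) (fun i => d1*u i + d2*v i + d3*w i)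
    = c1*d1*interZ u u + (c1*d2 + c2*d1)*interZ u v + (c1*d3 + c3*d1)*interZ u w
      + c2*d2*interZ v v + (c2*d3 + c3*d2)*interZ v w + c3*d3*interZ w w := by
  have h : ∀ i, (c1*u i + c2*v i + c3*w i) * (d1*u i + d2*v i + d3*w i)
      = c1*d1*(u i*u i) + (c1*d2 + c2*d1)*(u i*v i) + (c1*d3 + c3*d1)*(u i*w i)
        + c2*d2*(v i*v i) + (c2*d3 + c3*d2)*(v i*w i) + c3*d3*(w i*w i) := fun i => by ring
  simp only [interZ]
  rw [Finset.sum_congr rfl (fun i _ => h i)]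
  simp only [Finset.sum_add_distrib, ← Finset.mul_sum]
  ring

lemma interZ_antiK_eval {n : ℕ} (x : Fin (n+1) → ℤ) :
    interZ (antiK n) x = 3 * x 0 + ∑ i : Fin n, x i.succ := by
  simp only [interZ, antiK, Fin.sum_univ_succ]
  rw [Finset.sum_congr rfl (fun (i : Fin n) _ => show
    (if (i.succ : Fin (n+1)) = 0 then (3:ℤ) else -1) * x i.succ = -x i.succ by
    simp [Fin.succ_ne_zero])]
  simp only [if_pos rfl, Finset.sum_neg_distrib, neg_neg]
  norm_num
  ring

lemma antiK_self {n : ℕ} : interZ (antiK n) (antiK n) = 9 - n := by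
  rw [interZ_antiK_eval]
  simp only [antiK, if_pos rfl, Fin.succ_ne_zero, if_neg, reduceIte, Finset.sum_const,
    Finset.card_univ, Fintype.card_fin, smul_eq_mul]
  ring

lemma interZ_self_eval {n : ℕ} (x : Fin (n+1) → ℤ) :
    interZ x x = x 0 * x 0 - ∑ i : Fin n, x i.succ * x i.succ := by
  simp only [interZ, Fin.sum_univ_succ]; ring

lemma semidef {n : ℕ} (hn : n ≤ 9) (x : Fin (n+1) → ℤ)
    (hx : interZ (antiK n) x = 0) : interZ x x ≤ 0 := by
  rw [interZ_antiK_eval] at hx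
  rw [interZ_self_eval]
  have cs := sq_sum_le_card_mul_sum_sq (s := Finset.univ) (f := fun i : Fin n => x i.succ)
  simp only [Finset.card_univ, Fintype.card_fin] at cs
  have h9 : (3 * x 0)^2 ≤ (n:ℤ) * ∑ i : Fin n, x i.succ ^ 2 := by
    have : (3:ℤ) * x 0 = -∑ i : Fin n, x i.succ := by linarith
    rw [this]; simpa using cs
  have hn' : (n:ℤ) ≤ 9 := by exact_mod_cast hn
  have hsq : ∀ i : Fin n, x i.succ ^ 2 = x i.succ * x i.succ := fun i => sq (x i.succ)
  rw [Finset.sum_congr rfl fun i _ => hsq i] at h9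
  have hS : 0 ≤ ∑ i : Fin n, x i.succ * x i.succ :=
    Finset.sum_nonneg fun i _ => mul_self_nonneg _
  nlinarith

lemma strictdef {n : ℕ} (hn : n ≤ 8) (x : Fin (n+1) → ℤ)
    (hx : interZ (antiK n) x = 0) (hx0 : x ≠ 0) : interZ x x < 0 := by
  rcases lt_or_ge (interZ x x) 0 with h | h
  · exact h
  exfalso
  rw [interZ_antiK_eval] at hx
  rw [interZ_self_eval] at h
  have cs := sq_sum_le_card_mul_sum_sq (s := Finset.univ) (f := fun i : Fin n => x i.succ)
  simp only [Finset.card_univ, Fintype.card_fin] at cs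
  have h9 : (3 * x 0)^2 ≤ (n:ℤ) * ∑ i : Fin n, x i.succ ^ 2 := by
    have : (3:ℤ) * x 0 = -∑ i : Fin n, x i.succ := by linarith
    rw [this]; simpa using cs
  have hsq : ∀ i : Fin n, x i.succ ^ 2 = x i.succ * x i.succ := fun i => sq (x i.succ)
  rw [Finset.sum_congr rfl fun i _ => hsq i] at h9
  have hn' : (n:ℤ) ≤ 8 := by exact_mod_cast hn
  have hS : 0 ≤ ∑ i : Fin n, x i.succ * x i.succ :=
    Finset.sum_nonneg fun i _ => mul_self_nonneg _
  -- x0 = 0 and sum = 0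
  have hx00 : x 0 = 0 := by nlinarith
  have hSum0 : ∑ i : Fin n, x i.succ * x i.succ = 0 := by nlinarith
  have hall : ∀ i : Fin n, x i.succ = 0 := by
    intro i
    have := (Finset.sum_eq_zero_iff_of_nonneg (fun j _ => mul_self_nonneg (x j.succ))).1 hSum0 i
      (Finset.mem_univ i)
    exact mul_self_eq_zero.1 this
  apply hx0
  funext i
  refine Fin.cases ?_ ?_ i
  · exact hx00
  · exact hall

lemma interZ_symm {n : ℕ} (x y : Fin (n+1) → ℤ) : interZ x y = interZ y x := by
  simp only [interZ]
  rw [Finset.sum_congr rfl fun i _ => mul_comm (x i) (y i)]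
  ring

theorem pairing_bounds_of_distinct_minusOne' (r : ℕ) (h2 : 2 ≤ r) (h8 : r ≤ 8)
    (E E' : Fin (r + 1) → ℤ) (hE : interZ E E = -1 ∧ interZ (antiK r) E = 1)
    (hE' : interZ E' E' = -1 ∧ interZ (antiK r) E' = 1)
    (hne : E ≠ E') :
    0 ≤ interZ E E' ∧ (r ≤ 6 → interZ E E' ≤ 1) ∧ (r = 7 → interZ E E' ≤ 2) ∧
      (r = 8 → interZ E E' ≤ 3) := by
  obtain ⟨hEE, hKE⟩ := hE
  obtain ⟨hE'E', hKE'⟩ := hE'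
  have hEK : interZ E (antiK r) = 1 := (interZ_symm _ _).trans hKE
  have hE'K : interZ E' (antiK r) = 1 := (interZ_symm _ _).trans hKE'
  have hKK : interZ (antiK r) (antiK r) = 9 - (r:ℤ) := antiK_self
  obtain ⟨s, hs⟩ : ∃ s : ℤ, s = 9 - (r:ℤ) := ⟨_, rfl⟩
  rw [← hs] at hKK
  obtain ⟨p, hp⟩ : ∃ p : ℤ, p = interZ E E' := ⟨_, rfl⟩
  have hantiK_comb : (fun i => 0*E i + 0*E' i + 1*antiK r i) = antiK r := by
    funext i; ring
  have key : ∀ c1 c2 c3 : ℤ,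
      interZ (antiK r) (fun i => c1*E i + c2*E' i + c3*antiK r i) = c1 + c2 + c3*s := by
    intro c1 c2 c3
    have h := interZ_comb3 0 0 1 c1 c2 c3 E E' (antiK r)
    rw [hantiK_comb] at h
    rw [h, hEE, hE'E', hEK, hE'K, hKK, ← hp]
    ring
  have quad : ∀ c1 c2 c3 : ℤ,
      interZ (fun i => c1*E i + c2*E' i + c3*antiK r i)
        (fun i => c1*E i + c2*E' i + c3*antiK r i)
      = -c1^2 + 2*c1*c2*p + 2*c1*c3 - c2^2 + 2*c2*c3 + c3^2*s := by
    intro c1 c2 c3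
    rw [interZ_comb3, hEE, hE'E', hEK, hE'K, hKK, ← hp]
    ring
  -- lower bound
  have hlow : 0 ≤ p := by
    have h2' : interZ (antiK r) (fun i => 1*E i + (-1)*E' i + 0*antiK r i) = 0 := by
      rw [key]; ring
    have hxne : (fun i => 1*E i + (-1)*E' i + 0*antiK r i) ≠ 0 := by
      intro h0
      apply hne
      funext i
      have := congrFun h0 i
      simp only [Pi.zero_apply] at this
      linarith
    have hlt := strictdef h8 _ h2' hxne
    rw [quad] at hlt
    nlinarith
  have hspos : 1 ≤ s := by omega
  -- upper bound: Cauchy-Schwarz on K-orthogonal parts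
  have h2' : interZ (antiK r)
      (fun i => ((s*(s+1))*s)*E i + ((s^2*p - s)*s)*E' i
        + (-((s*(s+1)) + (s^2*p - s)))*antiK r i) = 0 := by
    rw [key]; ring
  have h3 := semidef (by omega) _ h2'
  rw [quad] at h3
  have hb2 : (s^2*p - s)^2 - (s*(s+1))^2 ≤ 0 := by
    have h4 : (s*(s+1)) * ((s^2*p - s)^2 - (s*(s+1))^2) ≤ 0 := by
      calc (s*(s+1)) * ((s^2*p - s)^2 - (s*(s+1))^2)
          = -((s*(s+1))*s)^2 + 2*(((s*(s+1))*s))*((s^2*p - s)*s)*p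
              + 2*((s*(s+1))*s)*(-((s*(s+1)) + (s^2*p - s)))
              - ((s^2*p - s)*s)^2
              + 2*((s^2*p - s)*s)*(-((s*(s+1)) + (s^2*p - s)))
              + (-((s*(s+1)) + (s^2*p - s)))^2*s := by ring
        _ ≤ 0 := h3
    have hcpos : (0:ℤ) < s*(s+1) := by nlinarith
    nlinarith [sq_nonneg (s^2*p - s), sq_nonneg (s*(s+1))]
  clear h3 h2' quad key hantiK_comb hKK hEE hE'E' hEK hE'K hKE hKE' hne
  have hs2pos : (0:ℤ) < s*s := mul_pos (by omega) (by omega)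
  have hble : s^2*p - s ≤ s*(s+1) := by
    have h5 : (s^2*p - s)^2 ≤ (s*(s+1))^2 := by linarith
    exact (abs_le_of_sq_le_sq' h5 (by nlinarith)).2
  have hbc : s*s*p ≤ s*s + 2*s := by nlinarith [hble]
  clear hb2 hble
  refine ⟨hp ▸ hlow, ?_, ?_, ?_⟩
  · intro hr6
    rw [← hp]
    have hs3 : 3 ≤ s := by omega
    by_contra hgt
    push_neg at hgt
    have hp2 : 2 ≤ p := hgt
    have hx1 : s*s*2 ≤ s*s*p := mul_le_mul_of_nonneg_left hp2 (le_of_lt hs2pos)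
    have hx2 : s*3 ≤ s*s := mul_le_mul_of_nonneg_left hs3 (by omega : (0:ℤ) ≤ s)
    linarith
  · intro hr7
    rw [← hp]
    have h4 : s = 2 := by omega
    subst h4
    linarith
  · intro hr8
    rw [← hp]
    have h4 : s = 1 := by omega
    subst h4
    linarith

theorem pairing_bounds_of_distinct_minusOne (r : ℕ) (h2 : 2 ≤ r) (h8 : r ≤ 8)
    (E E' : Fin (r + 1) → ℤ) (hE : IsMinusOneClass E) (hE' : IsMinusOneClass E')
    (hne : E ≠ E') :
    0 ≤ interZ E E' ∧ (r ≤ 6 → interZ E E' ≤ 1) ∧ (r = 7 → interZ E E' ≤ 2) ∧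
      (r = 8 → interZ E E' ≤ 3) := by
  exact pairing_bounds_of_distinct_minusOne' r h2 h8 E E' hE hE' hne
end

section
/- Let r be an integer with 3 ≤ r ≤ 8. The Weyl group W_r acts transitively on the set of (−1)-classes: for any two (−1)-classes E, E' in ℤ^{r+1}, there exists w ∈ W_r with w(E) = E'. -/
open scoped BigOperators
open MeasureTheory

/-- A root: `B(D,D) = -2` and `B(-K,D) = 0`. -/
def IsRoot {n : ℕ} (D : Fin (n + 1) → ℤ) : Prop :=
  interZ D D = -2 ∧ interZ (antiK n) D = 0

/-- The Weyl group `W_r`: the subgroup of `ℤ`-linear automorphisms of `ℤ^(n+1)`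
generated by the reflections `x ↦ x + B(D,x)·D` in roots `D`. -/
def WeylGroup (n : ℕ) : Subgroup ((Fin (n + 1) → ℤ) ≃ₗ[ℤ] (Fin (n + 1) → ℤ)) :=
  Subgroup.closure
    {w | ∃ D : Fin (n + 1) → ℤ, IsRoot D ∧ ∀ x, w x = x + interZ D x • D}

set_option maxHeartbeats 1000000
namespace WT

variable {n : ℕ}

lemma interZ_comm (x y : Fin (n+1) → ℤ) : interZ x y = interZ y x := by
  unfold interZ
  congr 1
  · ring
  · exact Finset.sum_congr rfl fun i _ => mul_comm _ _

lemma interZ_add_right (D x y : Fin (n+1) → ℤ) :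
    interZ D (x + y) = interZ D x + interZ D y := by
  simp only [interZ, Pi.add_apply, mul_add, Finset.sum_add_distrib]
  ring

lemma interZ_smul_right (D x : Fin (n+1) → ℤ) (c : ℤ) :
    interZ D (c • x) = c * interZ D x := by
  simp only [interZ, Pi.smul_apply, smul_eq_mul]
  rw [show ∑ i, D i * (c * x i) = c * ∑ i, D i * x i by
    rw [Finset.mul_sum]; exact Finset.sum_congr rfl fun i _ => by ring]
  ring

lemma interZ_add_left (D x y : Fin (n+1) → ℤ) :
    interZ (x + y) D = interZ x D + interZ y D := by
  rw [interZ_comm, interZ_add_right, interZ_comm D x, interZ_comm D y]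

lemma interZ_smul_left (D x : Fin (n+1) → ℤ) (c : ℤ) :
    interZ (c • x) D = c * interZ x D := by
  rw [interZ_comm, interZ_smul_right, interZ_comm]

/-- reflection in a D with D·D = -2, as a linear map -/
def reflL (D : Fin (n+1) → ℤ) : (Fin (n+1) → ℤ) →ₗ[ℤ] (Fin (n+1) → ℤ) where
  toFun x := x + interZ D x • D
  map_add' x y := by simp [interZ_add_right, add_smul]; abel
  map_smul' c x := by
    simp only [RingHom.id_apply, interZ_smul_right, smul_add, smul_smul]

lemma reflL_apply (D x : Fin (n+1) → ℤ) : reflL D x = x + interZ D x • D := rfl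

lemma reflL_invol (D : Fin (n+1) → ℤ) (hD : interZ D D = -2) (x : Fin (n+1) → ℤ) :
    reflL D (reflL D x) = x := by
  simp only [reflL_apply, interZ_add_right, interZ_smul_right, hD]
  module

/-- reflection as a linear equivalence -/
def reflE (D : Fin (n+1) → ℤ) (hD : interZ D D = -2) :
    (Fin (n+1) → ℤ) ≃ₗ[ℤ] (Fin (n+1) → ℤ) :=
  { reflL D with
    invFun := reflL D
    left_inv := reflL_invol D hD
    right_inv := reflL_invol D hD }

lemma reflE_apply (D : Fin (n+1) → ℤ) (hD : interZ D D = -2) (x : Fin (n+1) → ℤ) :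
    reflE D hD x = x + interZ D x • D := rfl

lemma reflE_mem (D : Fin (n+1) → ℤ) (hD : IsRoot D) :
    reflE D hD.1 ∈ WeylGroup n :=
  Subgroup.subset_closure ⟨D, hD, fun _ => rfl⟩

lemma refl_minusOne {D E : Fin (n+1) → ℤ} (hD : IsRoot D) (hE : IsMinusOneClass E) :
    IsMinusOneClass (E + interZ D E • D) := by
  obtain ⟨hD1, hD2⟩ := hD
  obtain ⟨hE1, hE2⟩ := hE
  constructor
  · simp only [interZ_add_left, interZ_add_right, interZ_smul_right, interZ_smul_left,
      interZ_comm D E] at *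
    nlinarith [hD1, hE1]
  · rw [interZ_add_right, interZ_smul_right, hD2, hE2]
    ring


/-- the index set {1,…,n} -/
def S (n : ℕ) : Finset (Fin (n+1)) := Finset.univ.erase 0

lemma card_S : (S n).card = n := by
  simp [S, Finset.card_erase_of_mem]

lemma sum_split (f : Fin (n+1) → ℤ) : ∑ i, f i = f 0 + ∑ i ∈ S n, f i := by
  rw [S, ← Finset.add_sum_erase _ f (Finset.mem_univ 0)]

lemma sums_of_minusOne {E : Fin (n+1) → ℤ} (hE : IsMinusOneClass E) :
    ∑ i ∈ S n, E i = 1 - 3 * E 0 ∧ ∑ i ∈ S n, (E i)^2 = (E 0)^2 + 1 := by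
  obtain ⟨h1, h2⟩ := hE
  unfold interZ at h1 h2
  rw [sum_split (fun i => E i * E i)] at h1
  rw [sum_split (fun i => antiK n i * E i)] at h2
  have e1 : ∑ i ∈ S n, E i * E i = ∑ i ∈ S n, (E i)^2 :=
    Finset.sum_congr rfl fun i _ => (sq (E i)).symm
  have e2 : ∑ i ∈ S n, antiK n i * E i = - ∑ i ∈ S n, E i := by
    rw [← Finset.sum_neg_distrib]
    refine Finset.sum_congr rfl fun i hi => ?_
    have : i ≠ 0 := (Finset.mem_erase.mp hi).1
    simp [antiK, this]
  rw [e1] at h1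
  rw [e2] at h2
  have hK0 : antiK n 0 = 3 := by simp [antiK]
  rw [hK0] at h2
  constructor <;> nlinarith [h1, h2]

/-- every integer a satisfies -a^2 ≤ a ≤ a^2 -/
lemma int_self_le_sq (a : ℤ) : a ≤ a^2 := by nlinarith [sq_nonneg a, sq_nonneg (a-1)]
lemma int_neg_sq_le (a : ℤ) : -a^2 ≤ a := by nlinarith [sq_nonneg (a+1)]

lemma d_nonneg {E : Fin (n+1) → ℤ} (hn : n ≤ 8) (hE : IsMinusOneClass E) : 0 ≤ E 0 := by
  obtain ⟨hs, hq⟩ := sums_of_minusOne hE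
  set d := E 0 with hd
  -- Cauchy-Schwarz: (∑ E)^2 ≤ card * ∑ E^2
  have CS : (∑ i ∈ S n, E i)^2 ≤ ((S n).card : ℤ) * ∑ i ∈ S n, (E i)^2 :=
    sq_sum_le_card_mul_sum_sq
  rw [hs, hq, card_S] at CS
  -- gives (1-3d)^2 ≤ n (d^2+1) ≤ 8(d^2+1), so d ≥ -1
  have hn' : (n : ℤ) ≤ 8 := by exact_mod_cast hn
  have h8 : (1 - 3*d)^2 ≤ 8 * (d^2 + 1) := by nlinarith [sq_nonneg d, hq, CS]
  have hdm1 : -1 ≤ d := by nlinarith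
  -- also ∑ E ≤ ∑ E^2 termwise: 1 - 3d ≤ d^2 + 1
  have hterm : ∑ i ∈ S n, E i ≤ ∑ i ∈ S n, (E i)^2 :=
    Finset.sum_le_sum fun i _ => int_self_le_sq (E i)
  rw [hs, hq] at hterm
  -- 1 - 3d ≤ d^2+1 → d(d+3) ≥ 0 → d ≥ 0 or d ≤ -3; with d ≥ -1, d ≥ 0
  nlinarith [hterm, hdm1]

lemma mult_nonneg {E : Fin (n+1) → ℤ} (hn3 : 3 ≤ n) (hn : n ≤ 8) (hE : IsMinusOneClass E)
    (hd : 1 ≤ E 0) : ∀ i ∈ S n, E i ≤ 0 := by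
  obtain ⟨hs, hq⟩ := sums_of_minusOne hE
  set d := E 0 with hdd
  intro k hk
  by_contra hpos
  push_neg at hpos
  have ht : 1 ≤ E k := hpos
  set t := E k with htt
  -- sums over (S n).erase k
  have hs' : ∑ i ∈ (S n).erase k, E i = 1 - 3*d - t := by
    have := Finset.add_sum_erase (S n) E hk
    omega
  have hq' : ∑ i ∈ (S n).erase k, (E i)^2 = d^2 + 1 - t^2 := by
    have := Finset.add_sum_erase (S n) (fun i => (E i)^2) hk
    linarith [this]
  have CS : (∑ i ∈ (S n).erase k, E i)^2
      ≤ (((S n).erase k).card : ℤ) * ∑ i ∈ (S n).erase k, (E i)^2 :=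
    sq_sum_le_card_mul_sum_sq
  have hcard : (((S n).erase k).card : ℤ) = (n : ℤ) - 1 := by
    rw [Finset.card_erase_of_mem hk, card_S]
    have : 1 ≤ n := by omega
    push_cast [Nat.cast_sub this]
    omega
  rw [hs', hq', hcard] at CS
  have hn' : (n : ℤ) ≤ 8 := by exact_mod_cast hn
  have hqnn : (0:ℤ) ≤ d^2 + 1 - t^2 := by
    rw [← hq']; positivity
  have CS7 : (1 - 3*d - t)^2 ≤ 7 * (d^2 + 1 - t^2) := by nlinarith [CS, hqnn, hn']
  nlinarith [CS7, mul_nonneg (by linarith : (0:ℤ) ≤ d) (by linarith : (0:ℤ) ≤ t - 1),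
    mul_nonneg (by linarith : (0:ℤ) ≤ t - 1) (by linarith : (0:ℤ) ≤ 8*t + 6),
    sq_nonneg d, hd]

lemma top_three {E : Fin (n+1) → ℤ} (hn3 : 3 ≤ n) (hn : n ≤ 8) (hE : IsMinusOneClass E)
    (hd : 1 ≤ E 0) :
    ∃ i ∈ S n, ∃ j ∈ S n, ∃ k ∈ S n, i ≠ j ∧ i ≠ k ∧ j ≠ k ∧
      E 0 < (-E i) + (-E j) + (-E k) := by
  obtain ⟨hs, hq⟩ := sums_of_minusOne hE
  have hm := mult_nonneg hn3 hn hE hd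
  set d := E 0 with hdd
  -- pick top three
  have h1 : (S n).Nonempty := by
    rw [← Finset.card_pos, card_S]; omega
  obtain ⟨i, hi, hmi⟩ := Finset.exists_max_image (S n) (fun l => -E l) h1
  have h2 : ((S n).erase i).Nonempty := by
    rw [← Finset.card_pos, Finset.card_erase_of_mem hi, card_S]; omega
  obtain ⟨j, hj2, hmj⟩ := Finset.exists_max_image _ (fun l => -E l) h2
  have h3 : (((S n).erase i).erase j).Nonempty := by
    rw [← Finset.card_pos, Finset.card_erase_of_mem hj2, Finset.card_erase_of_mem hi,
      card_S]; omega
  obtain ⟨k, hk3, hmk⟩ := Finset.exists_max_image _ (fun l => -E l) h3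
  have hj : j ∈ S n := (Finset.mem_erase.mp hj2).2
  have hk2 : k ∈ (S n).erase i := (Finset.mem_erase.mp hk3).2
  have hk : k ∈ S n := (Finset.mem_erase.mp hk2).2
  have hij : i ≠ j := fun h => (Finset.mem_erase.mp hj2).1 h.symm
  have hik : i ≠ k := fun h => (Finset.mem_erase.mp hk2).1 h.symm
  have hjk : j ≠ k := fun h => (Finset.mem_erase.mp hk3).1 h.symm
  refine ⟨i, hi, j, hj, k, hk, hij, hik, hjk, ?_⟩
  by_contra hcon
  push_neg at hcon
  -- notation
  set a := -E i with ha
  set b := -E j with hb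
  set c := -E k with hc
  have hab : b ≤ a := hmi j hj
  have hbc : c ≤ b := hmj k hk2
  have hc0 : (0:ℤ) ≤ c := by have := hm k hk; omega
  have hb0 : (0:ℤ) ≤ b := le_trans hc0 hbc
  have ha0 : (0:ℤ) ≤ a := le_trans hb0 hab
  set s' := (((S n).erase i).erase j).erase k with hs'
  have e1 := Finset.add_sum_erase (S n) E hi
  have e2 := Finset.add_sum_erase _ E hj2
  have e3 := Finset.add_sum_erase _ E hk3
  have q1 := Finset.add_sum_erase (S n) (fun l => (E l)^2) hi
  have q2 := Finset.add_sum_erase _ (fun l => (E l)^2) hj2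
  have q3 := Finset.add_sum_erase _ (fun l => (E l)^2) hk3
  have hSE : ∑ l ∈ s', E l = 1 - 3*d + a + b + c := by
    rw [hs']; linarith [hs, e1, e2, e3]
  have hai : (E i)^2 = a^2 := by rw [ha]; ring
  have hbj : (E j)^2 = b^2 := by rw [hb]; ring
  have hck : (E k)^2 = c^2 := by rw [hc]; ring
  have hSQ : ∑ l ∈ s', (E l)^2 = d^2 + 1 - a^2 - b^2 - c^2 := by
    rw [hs']; linarith [hq, q1, q2, q3, hai, hbj, hck]
  have hrest : ∀ l ∈ s', (E l)^2 ≤ c * (-E l) := by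
    intro l hl
    have hl2 : l ∈ ((S n).erase i).erase j := (Finset.mem_erase.mp hl).2
    have hl1 : l ∈ S n := (Finset.mem_erase.mp (Finset.mem_erase.mp hl2).2).2
    have h1 : -E l ≤ c := hmk l hl2
    have h2 : E l ≤ 0 := hm l hl1
    nlinarith [h1, h2]
  have hSQle : ∑ l ∈ s', (E l)^2 ≤ c * (- ∑ l ∈ s', E l) := by
    calc ∑ l ∈ s', (E l)^2 ≤ ∑ l ∈ s', c * (-E l) := Finset.sum_le_sum hrest
    _ = c * (- ∑ l ∈ s', E l) := by rw [← Finset.sum_neg_distrib, Finset.mul_sum]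
  have hSQ0 : (0:ℤ) ≤ ∑ l ∈ s', (E l)^2 := Finset.sum_nonneg fun l _ => sq_nonneg _
  rw [hSE, hSQ] at hSQle
  rw [hSQ] at hSQ0
  nlinarith [hSQle, hSQ0, hcon, hd,
    mul_nonneg hb0 (sub_nonneg.2 hab),
    mul_nonneg hc0 (sub_nonneg.2 (le_trans hbc hab)),
    mul_nonneg (sub_nonneg.2 hbc) (show (0:ℤ) ≤ a + b + c by linarith),
    mul_nonneg (show (0:ℤ) ≤ a + b + c - 3*c by linarith)
      (show (0:ℤ) ≤ d - (a + b + c) by linarith),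
    mul_nonneg (show (0:ℤ) ≤ d by linarith)
      (show (0:ℤ) ≤ d - (a + b + c) by linarith)]
/-- unit vector -/
def uv (j : Fin (n+1)) : Fin (n+1) → ℤ := fun i => if i = j then 1 else 0

lemma interZ_uv_zero (x : Fin (n+1) → ℤ) : interZ x (uv 0) = x 0 := by
  simp [interZ, uv, Finset.sum_ite_eq', mul_comm]
  ring

lemma interZ_uv (x : Fin (n+1) → ℤ) {j : Fin (n+1)} (hj : j ≠ 0) :
    interZ x (uv j) = -x j := by
  have : (0 : Fin (n+1)) ≠ j := fun h => hj h.symm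
  simp [interZ, uv, Finset.sum_ite_eq', this]

lemma interZ_sub_right (D x y : Fin (n+1) → ℤ) :
    interZ D (x - y) = interZ D x - interZ D y := by
  have : x - y = x + (-1 : ℤ) • y := by module
  rw [this, interZ_add_right, interZ_smul_right]; ring

lemma mem_S {j : Fin (n+1)} : j ∈ S n ↔ j ≠ 0 := by
  simp [S]

lemma last_ne_zero (hn3 : 3 ≤ n) : (Fin.last n : Fin (n+1)) ≠ 0 := by
  intro h
  have := congrArg Fin.val h
  simp [Fin.last] at this
  omega

/-- the base case: a (-1)-class with degree 0 is a unit vector and can be moved to uv (last). -/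
lemma base_case (hn3 : 3 ≤ n) (E : Fin (n+1) → ℤ) (hE : IsMinusOneClass E)
    (h0 : E 0 = 0) : ∃ w ∈ WeylGroup n, w E = uv (Fin.last n) := by
  obtain ⟨hs, hq⟩ := sums_of_minusOne hE
  rw [h0] at hs hq
  simp only [mul_zero, sub_zero, ne_eq, OfNat.ofNat_ne_zero, not_false_eq_true,
    zero_pow, zero_add] at hs hq
  -- each E l ∈ {0,1}
  have hsq : ∀ l ∈ S n, (E l)^2 = E l := by
    have hz : ∑ l ∈ S n, ((E l)^2 - E l) = 0 := by
      rw [Finset.sum_sub_distrib, hs, hq]; ring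
    have hnn : ∀ l ∈ S n, 0 ≤ (E l)^2 - E l := by
      intro l _; nlinarith [sq_nonneg (E l - 1), sq_nonneg (E l)]
    intro l hl
    have := (Finset.sum_eq_zero_iff_of_nonneg hnn).mp hz l hl
    linarith
  have h01 : ∀ l ∈ S n, E l = 0 ∨ E l = 1 := by
    intro l hl
    have := hsq l hl
    have h2 : E l * (E l - 1) = 0 := by nlinarith [this]
    rcases mul_eq_zero.mp h2 with h | h
    · exact Or.inl h
    · exact Or.inr (by linarith)
  -- find the index j with E j = 1
  have hex : ∃ j ∈ S n, E j = 1 := by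
    by_contra hno
    push_neg at hno
    have : ∑ l ∈ S n, E l = 0 := Finset.sum_eq_zero fun l hl => by
      rcases h01 l hl with h | h
      · exact h
      · exact absurd h (hno l hl)
    omega
  obtain ⟨j, hjS, hj1⟩ := hex
  have hrest : ∀ l ∈ (S n).erase j, E l = 0 := by
    have hsum0 : ∑ l ∈ (S n).erase j, E l = 0 := by
      have := Finset.add_sum_erase (S n) E hjS
      omega
    have hnn : ∀ l ∈ (S n).erase j, 0 ≤ E l := by
      intro l hl
      rcases h01 l (Finset.mem_erase.mp hl).2 with h | h <;> omega
    exact fun l hl => le_antisymm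
      (by have := (Finset.sum_eq_zero_iff_of_nonneg hnn).mp hsum0 l hl; omega) (hnn l hl)
  have hEuv : E = uv j := by
    funext l
    by_cases hl0 : l = 0
    · subst hl0
      have : j ≠ 0 := mem_S.mp hjS
      rw [h0]
      show (0:ℤ) = if (0 : Fin (n+1)) = j then 1 else 0
      rw [if_neg (Ne.symm this)]
    · by_cases hlj : l = j
      · subst hlj; simp [uv, hj1]
      · have : l ∈ (S n).erase j := Finset.mem_erase.mpr ⟨hlj, mem_S.mpr hl0⟩
        simp [uv, hlj, hrest l this]
  by_cases hjl : j = Fin.last n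
  · exact ⟨1, one_mem _, by rw [hEuv, hjl]; rfl⟩
  · -- reflect in uv j - uv last
    set D := uv j - uv (Fin.last n) with hD
    have hj0 : j ≠ 0 := mem_S.mp hjS
    have hl0 : (Fin.last n : Fin (n+1)) ≠ 0 := last_ne_zero hn3
    have hDj : D j = 1 := by simp [hD, uv, hjl]
    have hlj : Fin.last n ≠ j := fun h => hjl h.symm
    have hDl : D (Fin.last n) = -1 := by
      simp [hD, uv, hlj]
    have hroot : IsRoot D := by
      constructor
      · rw [hD, interZ_sub_right, interZ_uv _ hj0, interZ_uv _ hl0]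
        simp [uv, hjl, hlj]
      · rw [hD, interZ_sub_right, interZ_uv _ hj0, interZ_uv _ hl0]
        simp [antiK, hj0, hl0]
    have hDE : interZ D E = -1 := by
      rw [hEuv, interZ_uv D hj0, hDj]
    refine ⟨reflE D hroot.1, reflE_mem D hroot, ?_⟩
    rw [reflE_apply, hDE, hEuv, hD]
    funext l
    simp only [Pi.add_apply, Pi.smul_apply, Pi.sub_apply, smul_eq_mul]
    ring

/-- Descent: every (-1)-class can be moved to uv (last). -/
lemma to_base (hn3 : 3 ≤ n) (hn8 : n ≤ 8) :
    ∀ N : ℕ, ∀ E : Fin (n+1) → ℤ, IsMinusOneClass E → (E 0).toNat ≤ N →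
    ∃ w ∈ WeylGroup n, w E = uv (Fin.last n) := by
  intro N
  induction N with
  | zero =>
    intro E hE hN
    have h0 : E 0 = 0 := by
      have := d_nonneg hn8 hE
      omega
    exact base_case hn3 E hE h0
  | succ N ih =>
    intro E hE hN
    rcases eq_or_lt_of_le (d_nonneg hn8 hE) with h0 | hd
    · exact base_case hn3 E hE h0.symm
    · -- descent step
      obtain ⟨i, hi, j, hj, k, hk, hij, hik, hjk, hsum⟩ := top_three hn3 hn8 hE hd
      have hi0 : i ≠ 0 := mem_S.mp hi
      have hj0 : j ≠ 0 := mem_S.mp hj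
      have hk0 : k ≠ 0 := mem_S.mp hk
      set D : Fin (n+1) → ℤ := uv 0 - uv i - uv j - uv k with hD
      have hji : j ≠ i := hij.symm
      have hki : k ≠ i := hik.symm
      have hkj : k ≠ j := hjk.symm
      have h0i : (0 : Fin (n+1)) ≠ i := fun h => hi0 h.symm
      have h0j : (0 : Fin (n+1)) ≠ j := fun h => hj0 h.symm
      have h0k : (0 : Fin (n+1)) ≠ k := fun h => hk0 h.symm
      have hD0 : D 0 = 1 := by simp [hD, uv, h0i, h0j, h0k]
      have hDi : D i = -1 := by simp [hD, uv, hi0, hij, hik]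
      have hDj : D j = -1 := by simp [hD, uv, hj0, hji, hjk]
      have hDk : D k = -1 := by simp [hD, uv, hk0, hki, hkj]
      have hroot : IsRoot D := by
        constructor
        · rw [hD, interZ_sub_right, interZ_sub_right, interZ_sub_right,
            interZ_uv_zero, interZ_uv _ hi0, interZ_uv _ hj0, interZ_uv _ hk0,
            ← hD, hD0, hDi, hDj, hDk]
          ring
        · rw [hD, interZ_sub_right, interZ_sub_right, interZ_sub_right,
            interZ_uv_zero, interZ_uv _ hi0, interZ_uv _ hj0, interZ_uv _ hk0]
          simp [antiK, hi0, hj0, hk0]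
      have hDE : interZ D E = E 0 + E i + E j + E k := by
        rw [interZ_comm, hD, interZ_sub_right, interZ_sub_right, interZ_sub_right,
          interZ_uv_zero, interZ_uv _ hi0, interZ_uv _ hj0, interZ_uv _ hk0]
        ring
      set E₂ : Fin (n+1) → ℤ := E + interZ D E • D with hE₂
      have hE₂class : IsMinusOneClass E₂ := refl_minusOne hroot hE
      have hE₂0 : E₂ 0 = E 0 + (E 0 + E i + E j + E k) := by
        simp [hE₂, hDE, hD0]
      have hlt : E₂ 0 < E 0 := by
        rw [hE₂0]; omega
      have hnn2 : 0 ≤ E₂ 0 := d_nonneg hn8 hE₂class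
      have htn : (E₂ 0).toNat ≤ N := by omega
      obtain ⟨w, hw, hwE⟩ := ih E₂ hE₂class htn
      refine ⟨w * reflE D hroot.1, mul_mem hw (reflE_mem D hroot), ?_⟩
      have hre : reflE D hroot.1 E = E₂ := by rw [reflE_apply]
      show w (reflE D hroot.1 E) = uv (Fin.last n)
      rw [hre, hwE]

end WT

theorem weyl_transitive_on_minusOne (r : ℕ) (h3 : 3 ≤ r) (h8 : r ≤ 8)
    (E E' : Fin (r + 1) → ℤ) (hE : IsMinusOneClass E) (hE' : IsMinusOneClass E') :
    ∃ w ∈ WeylGroup r, w E = E' := by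
  obtain ⟨w1, hw1, hw1E⟩ := WT.to_base h3 h8 (E 0).toNat E hE le_rfl
  obtain ⟨w2, hw2, hw2E⟩ := WT.to_base h3 h8 (E' 0).toNat E' hE' le_rfl
  refine ⟨w2⁻¹ * w1, mul_mem (inv_mem hw2) hw1, ?_⟩
  show w2.symm (w1 E) = E'
  rw [hw1E, ← hw2E, LinearEquiv.symm_apply_apply]
end

section
/- For the blow-up S_2 of ℙ² in 2 points, Peyre's constant is α(S_2) = 1/24; that is, 3 · vol{x ∈ ℝ³ : B(E, x) ≥ 0 for every (−1)-class E, and 0 ≤ B(−K_2, x) ≤ 1} = 1/24, where vol is the standard Lebesgue measure on ℝ³ and the (−1)-classes are exactly (0,1,0), (0,0,1), and (1,−1,−1). -/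
open scoped BigOperators
open MeasureTheory

/-!
On `S₂` the (−1)-curves are `E₁`, `E₂` and the strict transform `H − E₁ − E₂` of the line
through the two points, so the nef cone is cut out by the three pairings `B(E, ·)`.
Since `−K₂ = 2E₁ + 2E₂ + 3(H − E₁ − E₂)`, the map
`x ↦ (2B(E₁, x), 2B(E₂, x), 3B(H − E₁ − E₂, x))` has determinant `12` and carries the
truncated nef cone `{x nef, B(−K₂, x) ≤ 1}` onto the corner simplex `{y ≥ 0, ∑ yᵢ ≤ 1}`, of
volume `1/3!`. Hence the truncated cone has volume `1/72`, and `α(S₂) = 3/72 = 1/24`.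
-/

open Set
open scoped Nat

def cornerSimplex (n : ℕ) (t : ℝ) : Set (Fin n → ℝ) :=
  {y | (∀ i, 0 ≤ y i) ∧ ∑ i, y i ≤ t}

lemma cornerSimplex_eq_empty {n : ℕ} {t : ℝ} (ht : t < 0) : cornerSimplex n t = ∅ :=
  eq_empty_of_forall_notMem fun _ ⟨hy, hsum⟩ =>
    (Finset.sum_nonneg fun i _ => hy i).not_gt (hsum.trans_lt ht)

lemma cornerSimplex_succ (n : ℕ) (t : ℝ) :
    cornerSimplex (n + 1) t = MeasurableEquiv.piFinSuccAbove (fun _ => ℝ) 0 ⁻¹'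
      {p | 0 ≤ p.1 ∧ p.2 ∈ cornerSimplex n (t - p.1)} := by
  ext y
  simp only [cornerSimplex, Fin.forall_fin_succ, Fin.sum_univ_succ, mem_ofPred_eq,
    MeasurableEquiv.piFinSuccAbove_apply, Fin.insertNthEquiv_zero, le_sub_iff_add_le',
    preimage_ofPred_eq, Fin.consEquiv_symm_apply]
  tauto

lemma measurableSet_cornerSimplex_fiberwise (n : ℕ) (t : ℝ) :
    MeasurableSet {p : ℝ × (Fin n → ℝ) | 0 ≤ p.1 ∧ p.2 ∈ cornerSimplex n (t - p.1)} := by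
  simp only [cornerSimplex, mem_ofPred_eq]
  measurability

lemma integral_sub_pow_div_factorial (n : ℕ) (t : ℝ) :
    ∫ a in (0)..t, (t - a) ^ n / n ! = t ^ (n + 1) / (n + 1)! := by
  rw [intervalIntegral.integral_div, intervalIntegral.integral_comp_sub_left (fun a => a ^ n),
    integral_pow, Nat.factorial_succ]
  push_cast
  field_simp
  ring

theorem volume_cornerSimplex (n : ℕ) {t : ℝ} (ht : 0 ≤ t) :
    volume (cornerSimplex n t) = ENNReal.ofReal (t ^ n / n !) := by
  induction n generalizing t with
  | zero =>
    have huniv : cornerSimplex 0 t = univ := by simp [cornerSimplex, ht]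
    simp [huniv, volume_pi]
  | succ n ih =>
    have hmeas := measurableSet_cornerSimplex_fiberwise n t
    rw [cornerSimplex_succ, (volume_preserving_piFinSuccAbove (fun _ => ℝ) 0).measure_preimage
      hmeas.nullMeasurableSet, Measure.volume_eq_prod, Measure.prod_apply hmeas]
    have hfiber (a : ℝ) :
        volume (Prod.mk a ⁻¹' {p : ℝ × (Fin n → ℝ) | 0 ≤ p.1 ∧ p.2 ∈ cornerSimplex n (t - p.1)}) =
          (Icc 0 t).indicator (fun a => ENNReal.ofReal ((t - a) ^ n / n !)) a := by
      by_cases ha : a ∈ Icc 0 t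
      · simp [indicator_of_mem ha, ha.1, ih (sub_nonneg.2 ha.2)]
      · rw [indicator_of_notMem ha]
        rcases not_and_or.1 ha with ha | ha
        · simp [ha]
        · simp [cornerSimplex_eq_empty (sub_neg.2 (not_le.1 ha))]
    simp_rw [hfiber]
    rw [lintegral_indicator measurableSet_Icc, ← ofReal_integral_eq_lintegral_ofReal,
      integral_Icc_eq_integral_Ioc, ← intervalIntegral.integral_of_le ht,
      integral_sub_pow_div_factorial]
    · exact (by fun_prop : Continuous fun a : ℝ => (t - a) ^ n / n !).integrableOn_Icc
    · filter_upwards [ae_restrict_mem measurableSet_Icc] with a ha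
      have := sub_nonneg.2 ha.2
      positivity

lemma interR_antiKR_two (x : Fin (2 + 1) → ℝ) : interR (antiKR 2) x = 3 * x 0 + x 1 + x 2 := by
  simp [interR, antiKR, Fin.sum_univ_three]
  ring

lemma isMinusOneClass_two_iff (E : Fin (2 + 1) → ℤ) :
    IsMinusOneClass E ↔ E = ![0, 1, 0] ∨ E = ![0, 0, 1] ∨ E = ![1, -1, -1] := by
  refine ⟨fun ⟨hself, hK⟩ => ?_, by rintro (rfl | rfl | rfl) <;> exact ⟨by decide, by decide⟩⟩
  have hE : E = ![E 0, E 1, E 2] := by ext i; fin_cases i <;> rfl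
  generalize E 0 = a, E 1 = b, E 2 = c at hE
  subst hE
  have hsq : b ^ 2 + c ^ 2 = a ^ 2 + 1 := by
    simp [interZ, Fin.sum_univ_three] at hself; linarith
  have hsum : b + c = 1 - 3 * a := by
    simp [interZ, antiK, Fin.sum_univ_three] at hK; linarith
  simp only [Matrix.vecCons_inj, and_true]
  -- `(b + c)² ≤ 2(b² + c²)` forces `7a² − 6a − 1 ≤ 0`, i.e. `a ∈ {0, 1}`.
  have ha0 : 0 ≤ a := by nlinarith [sq_nonneg (b - c)]
  have ha1 : a ≤ 1 := by nlinarith [sq_nonneg (b - c)]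
  interval_cases a
  · have hbc : b * c = 0 := by nlinarith
    rcases mul_eq_zero.1 hbc with rfl | rfl <;> omega
  · have hbc : b * c = 1 := by nlinarith
    rcases Int.eq_one_or_neg_one_of_mul_eq_one' hbc with ⟨rfl, rfl⟩ | ⟨rfl, rfl⟩ <;> omega

lemma mem_nefCone_two_iff (x : Fin (2 + 1) → ℝ) :
    x ∈ NefCone 2 ↔ x 1 ≤ 0 ∧ x 2 ≤ 0 ∧ 0 ≤ x 0 + x 1 + x 2 := by
  simp only [NefCone, mem_ofPred_eq, isMinusOneClass_two_iff, forall_eq_or_imp, forall_eq]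
  refine and_congr ?_ (and_congr ?_ ?_) <;> simp [interR, Fin.sum_univ_three]
  constructor <;> intro <;> linarith

-- Rows: `2 B(E₁, ·)`, `2 B(E₂, ·)`, `3 B(H − E₁ − E₂, ·)`; they sum to `B(−K₂, ·)`.
def weightedMinusOnePairings : (Fin (2 + 1) → ℝ) →ₗ[ℝ] (Fin (2 + 1) → ℝ) :=
  Matrix.toLin' !![0, -2, 0; 0, 0, -2; 3, 3, 3]

lemma weightedMinusOnePairings_apply (x : Fin (2 + 1) → ℝ) :
    weightedMinusOnePairings x = ![-2 * x 1, -2 * x 2, 3 * (x 0 + x 1 + x 2)] := by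
  ext i
  fin_cases i <;>
    simp [weightedMinusOnePairings, Matrix.mulVec, dotProduct, Fin.sum_univ_three, mul_add]

lemma det_weightedMinusOnePairings : LinearMap.det weightedMinusOnePairings = 12 := by
  simp [weightedMinusOnePairings, LinearMap.det_toLin', Matrix.det_fin_three]
  norm_num

lemma truncatedNefCone_two_eq_preimage :
    {x : Fin (2 + 1) → ℝ | x ∈ NefCone 2 ∧ 0 ≤ interR (antiKR 2) x ∧ interR (antiKR 2) x ≤ 1} =
      weightedMinusOnePairings ⁻¹' cornerSimplex 3 1 := by
  ext x
  simp only [mem_ofPred_eq, mem_preimage, mem_nefCone_two_iff, interR_antiKR_two, cornerSimplex,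
    weightedMinusOnePairings_apply, Fin.forall_fin_succ, Fin.sum_univ_three,
    Matrix.cons_val_zero, Matrix.cons_val_one, Matrix.cons_val_two, Matrix.cons_val_succ,
    Matrix.tail_cons, Matrix.head_cons, IsEmpty.forall_iff, and_true]
  constructor
  · rintro ⟨⟨h₁, h₂, h₃⟩, -, h₄⟩
    exact ⟨⟨by linarith, by linarith, by linarith⟩, by linarith⟩
  · rintro ⟨⟨h₁, h₂, h₃⟩, h₄⟩
    exact ⟨⟨by linarith, by linarith, by linarith⟩, by linarith, by linarith⟩

theorem alpha_S2 :
    3 * (volume {x : Fin (2 + 1) → ℝ | x ∈ NefCone 2 ∧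
      0 ≤ interR (antiKR 2) x ∧ interR (antiKR 2) x ≤ 1}).toReal = 1 / 24 := by
  rw [truncatedNefCone_two_eq_preimage, Measure.addHaar_preimage_linearMap _ (by
    rw [det_weightedMinusOnePairings]; norm_num), det_weightedMinusOnePairings,
    volume_cornerSimplex 3 zero_le_one, ← ENNReal.ofReal_mul (abs_nonneg _),
    ENNReal.toReal_ofReal (by positivity)]
  norm_num [Nat.factorial]
end

section
/- For the blow-up S_1 of ℙ² in one point, Peyre's constant is α(S_1) = 1/6; that is, 2 · vol{x ∈ ℝ² : B((0,1), x) ≥ 0, B((1,−1), x) ≥ 0, and 0 ≤ B((3,−1), x) ≤ 1} = 1/6, where vol is the standard Lebesgue measure on ℝ². -/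
open scoped BigOperators
open MeasureTheory

/-!
With `E₁ = (0,1)` and `H - E₁ = (1,-1)` one has `-K₁ = 2 E₁ + 3 (H - E₁)`, so in the coordinates
`s = 2 B(E₁, x)`, `t = 3 B(H - E₁, x)` the region becomes the standard triangle
`s, t ≥ 0, s + t ≤ 1` of area `1/2`. This change of coordinates has determinant `6`, hence the
region has area `1/12` and `α(S₁) = 2 · 1/12 = 1/6`.
-/

open Set

theorem volume_region_between_cc_eq_lintegral {α : Type*} [MeasurableSpace α] {μ : Measure α}
    [SFinite μ] {f g : α → ℝ} {s : Set α} (hf : Measurable f) (hg : Measurable g)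
    (hs : MeasurableSet s) :
    μ.prod volume {p : α × ℝ | p.1 ∈ s ∧ p.2 ∈ Icc (f p.1) (g p.1)} =
      ∫⁻ x in s, ENNReal.ofReal (g x - f x) ∂μ := by
  rw [Measure.prod_apply (measurableSet_region_between_cc hf hg hs), ← lintegral_indicator hs]
  refine lintegral_congr fun x => ?_
  by_cases hx : x ∈ s
  · simp only [preimage, mem_ofPred_eq, hx, true_and, ofPred_mem_eq, Real.volume_Icc,
      indicator_of_mem]
  · simp [hx]

theorem volume_stdTriangle :
    volume {x : Fin 2 → ℝ | 0 ≤ x 0 ∧ 0 ≤ x 1 ∧ x 0 + x 1 ≤ 1} = ENNReal.ofReal (1 / 2) := by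
  have hT : {x : Fin 2 → ℝ | 0 ≤ x 0 ∧ 0 ≤ x 1 ∧ x 0 + x 1 ≤ 1} =
      MeasurableEquiv.finTwoArrow ⁻¹' {p : ℝ × ℝ | p.1 ∈ Icc 0 1 ∧ p.2 ∈ Icc 0 (1 - p.1)} := by
    ext x
    simp only [mem_ofPred_eq, mem_preimage, MeasurableEquiv.finTwoArrow_apply, mem_Icc]
    constructor
    · rintro ⟨h₀, h₁, h₂⟩
      exact ⟨⟨h₀, by linarith⟩, h₁, by linarith⟩
    · rintro ⟨⟨h₀, -⟩, h₁, h₂⟩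
      exact ⟨h₀, h₁, by linarith⟩
  have hg : Continuous fun x : ℝ => 1 - x := by fun_prop
  have hg_nonneg : ∀ᵐ x ∂volume.restrict (Icc (0 : ℝ) 1), 0 ≤ 1 - x - 0 :=
    (ae_restrict_iff' measurableSet_Icc).2 (ae_of_all _ fun x hx => by simpa using hx.2)
  rw [hT, (volume_preserving_finTwoArrow ℝ).measure_preimage
      (measurableSet_region_between_cc measurable_const hg.measurable
        measurableSet_Icc).nullMeasurableSet,
    Measure.volume_eq_prod,
    volume_region_between_cc_eq_lintegral measurable_const hg.measurable measurableSet_Icc,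
    ← ofReal_integral_eq_lintegral_ofReal (by fun_prop : Continuous _).integrableOn_Icc
      hg_nonneg,
    integral_Icc_eq_integral_Ioc, ← intervalIntegral.integral_of_le zero_le_one]
  norm_num [intervalIntegral.integral_comp_sub_left fun x : ℝ => x]

theorem volume_setOf_triangle_fin_two {a b c d : ℝ} (h : a * d - b * c ≠ 0) :
    volume {x : Fin 2 → ℝ | 0 ≤ a * x 0 + b * x 1 ∧ 0 ≤ c * x 0 + d * x 1 ∧
      a * x 0 + b * x 1 + (c * x 0 + d * x 1) ≤ 1} =
      ENNReal.ofReal (1 / (2 * |a * d - b * c|)) := by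
  have hdet : LinearMap.det (Matrix.toLin' !![a, b; c, d]) = a * d - b * c := by
    rw [LinearMap.det_toLin', Matrix.det_fin_two_of]
  have hpre : {x : Fin 2 → ℝ | 0 ≤ a * x 0 + b * x 1 ∧ 0 ≤ c * x 0 + d * x 1 ∧
      a * x 0 + b * x 1 + (c * x 0 + d * x 1) ≤ 1} =
      Matrix.toLin' !![a, b; c, d] ⁻¹' {y | 0 ≤ y 0 ∧ 0 ≤ y 1 ∧ y 0 + y 1 ≤ 1} := by
    ext x
    simp [Matrix.mulVec, dotProduct, Fin.sum_univ_two]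
  rw [hpre, Measure.addHaar_preimage_linearMap _ (hdet ▸ h), hdet, volume_stdTriangle,
    ← ENNReal.ofReal_mul (abs_nonneg _), abs_inv]
  ring_nf

lemma interR_fin_two (e x : Fin 2 → ℝ) : interR (n := 1) e x = e 0 * x 0 - e 1 * x 1 := by
  simp only [interR, Fin.sum_univ_succ, Fin.sum_univ_zero, Fin.succ_zero_eq_one]
  ring

theorem alpha_S1 :
    2 * (volume {x : Fin (1 + 1) → ℝ |
      0 ≤ interR (n := 1) ![0, 1] x ∧ 0 ≤ interR (n := 1) ![1, -1] x ∧
      0 ≤ interR (n := 1) ![3, -1] x ∧ interR (n := 1) ![3, -1] x ≤ 1}).toReal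
      = 1 / 6 := by
  have hregion : {x : Fin (1 + 1) → ℝ |
      0 ≤ interR (n := 1) ![0, 1] x ∧ 0 ≤ interR (n := 1) ![1, -1] x ∧
      0 ≤ interR (n := 1) ![3, -1] x ∧ interR (n := 1) ![3, -1] x ≤ 1} =
      {x : Fin 2 → ℝ | 0 ≤ 0 * x 0 + (-2) * x 1 ∧ 0 ≤ 3 * x 0 + 3 * x 1 ∧
        0 * x 0 + (-2) * x 1 + (3 * x 0 + 3 * x 1) ≤ 1} := by
    ext x
    simp only [mem_ofPred_eq, interR_fin_two, Matrix.cons_val_zero, Matrix.cons_val_one]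
    constructor
    · rintro ⟨h₁, h₂, -, h₄⟩
      exact ⟨by linarith, by linarith, by linarith⟩
    · rintro ⟨h₁, h₂, h₃⟩
      exact ⟨by linarith, by linarith, by linarith, by linarith⟩
  rw [hregion, volume_setOf_triangle_fin_two (by norm_num), ENNReal.toReal_ofReal (by positivity)]
  norm_num
end

section
/- For the blow-up S_3 of ℙ² in 3 points in general position, Peyre's constant is α(S_3) = 1/72; that is, 4 · vol{x ∈ ℝ⁴ : B(E, x) ≥ 0 for every (−1)-class E, and 0 ≤ B(−K_3, x) ≤ 1} = 1/72, where vol is the standard Lebesgue measure on ℝ⁴. -/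
open scoped BigOperators
open MeasureTheory

/-!
The (−1)-classes of `S_3` are the six classes `E_i` and `H − E_i − E_j`, so the slice
`{x nef, 0 ≤ ω(x) ≤ 1}` is the polytope `x_i ≤ 0`, `x_0 + x_i + x_j ≥ 0`,
`0 ≤ 3x_0 + x_1 + x_2 + x_3 ≤ 1`.
The hyperplane `x_0 + x_1 + x_2 + x_3 = 0` cuts it into two 4-simplices, each the preimage of the
order simplex `0 ≤ s_0 ≤ s_1 ≤ s_2 ≤ s_3 ≤ 1` (of volume `1/4!`, since its `4!` permuted copies tile
the unit cube) under a linear map of determinant `±24`. Hence the slice has volume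
`2 / 24² = 1/288` and `α(S_3) = 4/288 = 1/72`.
-/

open scoped ENNReal Nat
open Set

lemma addHaar_setOf_linearMap_eq_zero {E : Type*} [NormedAddCommGroup E] [NormedSpace ℝ E]
    [MeasurableSpace E] [BorelSpace E] [FiniteDimensional ℝ E] (μ : Measure E)
    [μ.IsAddHaarMeasure] {f : E →ₗ[ℝ] ℝ} {v : E} (hv : f v ≠ 0) : μ {x | f x = 0} = 0 :=
  Measure.addHaar_submodule μ (LinearMap.ker f) fun h =>
    hv (h ▸ Submodule.mem_top : v ∈ LinearMap.ker f)

section Pi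

variable {ι : Type*} [Fintype ι]

lemma volume_setOf_apply_eq_apply {i j : ι} (hij : i ≠ j) :
    volume {x : ι → ℝ | x i = x j} = 0 := by
  classical
  let f : (ι → ℝ) →ₗ[ℝ] ℝ := LinearMap.proj i - (LinearMap.proj j : (ι → ℝ) →ₗ[ℝ] ℝ)
  refine measure_mono_null (fun x hx => ?_)
    (addHaar_setOf_linearMap_eq_zero volume (f := f) (v := Pi.single i 1) (by simp [f, hij.symm]))
  simpa [f, sub_eq_zero] using hx

lemma volume_setOf_sum_eq_zero [Nonempty ι] : volume {x : ι → ℝ | ∑ i, x i = 0} = 0 := by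
  classical
  obtain ⟨i⟩ := ‹Nonempty ι›
  let f : (ι → ℝ) →ₗ[ℝ] ℝ := ∑ i, LinearMap.proj i
  refine measure_mono_null (fun x hx => ?_)
    (addHaar_setOf_linearMap_eq_zero volume (f := f) (v := Pi.single i 1) (by simp [f]))
  simpa [f] using hx

lemma measurePreserving_comp_perm (σ : Equiv.Perm ι) :
    MeasurePreserving (fun x : ι → ℝ => x ∘ σ) volume volume := by
  convert volume_measurePreserving_piCongrLeft (fun _ : ι => ℝ) σ.symm using 1
  ext x i
  simp [MeasurableEquiv.coe_piCongrLeft, Equiv.piCongrLeft_apply_eq_cast]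

end Pi

section OrderSimplex

variable {n : ℕ}

def orderSimplex (n : ℕ) : Set (Fin n → ℝ) := {s | Monotone s} ∩ Icc 0 1

lemma measurableSet_orderSimplex : MeasurableSet (orderSimplex n) :=
  isClosed_monotone.measurableSet.inter measurableSet_Icc

lemma mem_orderSimplex_succ_iff {s : Fin (n + 1) → ℝ} :
    s ∈ orderSimplex (n + 1) ↔
      0 ≤ s 0 ∧ (∀ i : Fin n, s i.castSucc ≤ s i.succ) ∧ s (Fin.last n) ≤ 1 := by
  simp only [orderSimplex, mem_inter_iff, mem_ofPred_eq, mem_Icc, ← Fin.monotone_iff_le_succ]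
  constructor
  · rintro ⟨hs, h0, h1⟩
    exact ⟨h0 0, hs, h1 _⟩
  · rintro ⟨h0, hs, h1⟩
    exact ⟨hs, fun i => h0.trans (hs (Fin.zero_le i)), fun i => (hs (Fin.le_last i)).trans h1⟩

lemma iUnion_preimage_orderSimplex :
    ⋃ σ : Equiv.Perm (Fin n), (· ∘ σ) ⁻¹' orderSimplex n = Icc 0 1 := by
  ext x
  simp only [mem_iUnion, mem_preimage, orderSimplex, mem_inter_iff, mem_ofPred_eq, mem_Icc]
  constructor
  · rintro ⟨σ, -, h0, h1⟩
    exact ⟨fun i => by simpa using h0 (σ.symm i), fun i => by simpa using h1 (σ.symm i)⟩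
  · rintro ⟨h0, h1⟩
    exact ⟨Tuple.sort x, Tuple.monotone_sort x,
      fun i => h0 (Tuple.sort x i), fun i => h1 (Tuple.sort x i)⟩

lemma pairwise_aedisjoint_preimage_orderSimplex :
    Pairwise (Function.onFun (AEDisjoint volume)
      fun σ : Equiv.Perm (Fin n) => (· ∘ σ) ⁻¹' orderSimplex n) := by
  intro σ τ hστ
  obtain ⟨i, hi⟩ : ∃ i, σ i ≠ τ i := by
    by_contra! h
    exact hστ (Equiv.ext h)
  refine measure_mono_null (fun x ⟨hσ, hτ⟩ => ?_) (volume_setOf_apply_eq_apply hi)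
  exact congrFun (Tuple.unique_monotone hσ.1 hτ.1) i

theorem volume_orderSimplex : volume (orderSimplex n) = (n ! : ℝ≥0∞)⁻¹ := by
  have hcube := Real.volume_Icc_pi (a := (0 : Fin n → ℝ)) (b := 1)
  have hmeas (σ : Equiv.Perm (Fin n)) : NullMeasurableSet ((· ∘ σ) ⁻¹' orderSimplex n) :=
    (measurableSet_orderSimplex.preimage
      (measurePreserving_comp_perm σ).measurable).nullMeasurableSet
  rw [← iUnion_preimage_orderSimplex,
    measure_iUnion₀ pairwise_aedisjoint_preimage_orderSimplex hmeas] at hcube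
  simp only [(measurePreserving_comp_perm _).measure_preimage
    measurableSet_orderSimplex.nullMeasurableSet, tsum_fintype, Finset.sum_const,
    Finset.card_univ, Fintype.card_perm, Fintype.card_fin, nsmul_eq_mul, Pi.zero_apply,
    Pi.one_apply, sub_zero, ENNReal.ofReal_one, Finset.prod_const_one] at hcube
  exact ENNReal.eq_inv_of_mul_eq_one_left (by rwa [mul_comm])

lemma volume_preimage_orderSimplex (M : Matrix (Fin n) (Fin n) ℝ) (hM : M.det ≠ 0) :
    volume (Matrix.toLin' M ⁻¹' orderSimplex n) =
      ENNReal.ofReal |M.det⁻¹| * (n ! : ℝ≥0∞)⁻¹ := by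
  rw [Measure.addHaar_preimage_linearMap _ (by rwa [LinearMap.det_toLin']),
    LinearMap.det_toLin', volume_orderSimplex]

end OrderSimplex

lemma interZ_three (x y : Fin (3 + 1) → ℤ) :
    interZ x y = x 0 * y 0 - x 1 * y 1 - x 2 * y 2 - x 3 * y 3 := by
  rw [interZ, Fin.sum_univ_four]
  ring

lemma interR_three (x y : Fin (3 + 1) → ℝ) :
    interR x y = x 0 * y 0 - x 1 * y 1 - x 2 * y 2 - x 3 * y 3 := by
  rw [interR, Fin.sum_univ_four]
  ring

def minusOneClassesS3 : List (Fin 4 → ℤ) :=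
  [![0, 1, 0, 0], ![0, 0, 1, 0], ![0, 0, 0, 1], ![1, -1, -1, 0], ![1, -1, 0, -1], ![1, 0, -1, -1]]

lemma mem_minusOneClassesS3_of_coords {a b c d : ℤ} (hsq : a * a - b * b - c * c - d * d = -1)
    (hK : 3 * a + b + c + d = 1) : ![a, b, c, d] ∈ minusOneClassesS3 := by
  -- Cauchy–Schwarz `(b + c + d)² ≤ 3 (b² + c² + d²)` reads `(1 - 3a)² ≤ 3 (a² + 1)`.
  have ha : 0 ≤ a ∧ a ≤ 1 := by
    constructor <;> nlinarith [sq_nonneg (b - c), sq_nonneg (b - d), sq_nonneg (c - d)]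
  have hb : -1 ≤ b ∧ b ≤ 1 := by constructor <;> nlinarith [sq_nonneg c, sq_nonneg d]
  have hc : -1 ≤ c ∧ c ≤ 1 := by constructor <;> nlinarith [sq_nonneg b, sq_nonneg d]
  obtain rfl : d = 1 - 3 * a - b - c := by linarith
  obtain ⟨ha0, ha1⟩ := ha
  obtain ⟨hb0, hb1⟩ := hb
  obtain ⟨hc0, hc1⟩ := hc
  interval_cases a <;> interval_cases b <;> interval_cases c <;> simp_all [minusOneClassesS3]

lemma isMinusOneClass_iff_mem {E : Fin 4 → ℤ} : IsMinusOneClass E ↔ E ∈ minusOneClassesS3 := by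
  constructor
  · rintro ⟨hsq, hK⟩
    rw [interZ_three] at hsq hK
    have hE : E = ![E 0, E 1, E 2, E 3] := by ext i; fin_cases i <;> rfl
    exact hE ▸ mem_minusOneClassesS3_of_coords hsq (by simpa [antiK] using hK)
  · revert E
    simp only [minusOneClassesS3, List.forall_mem_cons, IsMinusOneClass]
    decide

lemma nefCone_three : NefCone 3 = {x : Fin 4 → ℝ | x 1 ≤ 0 ∧ x 2 ≤ 0 ∧ x 3 ≤ 0 ∧
    0 ≤ x 0 + x 1 + x 2 ∧ 0 ≤ x 0 + x 1 + x 3 ∧ 0 ≤ x 0 + x 2 + x 3} := by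
  ext x
  simp only [NefCone, mem_ofPred_eq, isMinusOneClass_iff_mem, minusOneClassesS3,
    List.forall_mem_cons, interR_three]
  simp

/- With `σ = x_0 + x_1 + x_2 + x_3`, the rows are the partial sums of
`(3σ, -2x_1, -2x_2, -2x_3)`, resp. of
`(-3σ, 2(x_0 + x_2 + x_3), 2(x_0 + x_1 + x_3), 2(x_0 + x_1 + x_2))`;
both add up to `ω(x) = 3x_0 + x_1 + x_2 + x_3`. -/
def chartPos : Matrix (Fin 4) (Fin 4) ℝ :=
  !![3, 3, 3, 3; 3, 1, 3, 3; 3, 1, 1, 3; 3, 1, 1, 1]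

def chartNeg : Matrix (Fin 4) (Fin 4) ℝ :=
  !![-3, -3, -3, -3; -1, -3, -1, -1; 1, -1, -1, 1; 3, 1, 1, 1]

lemma det_chartPos : chartPos.det = -24 := by
  simp [chartPos, Matrix.det_succ_row_zero, Fin.sum_univ_succ, Fin.succAbove]
  norm_num

lemma det_chartNeg : chartNeg.det = 24 := by
  simp [chartNeg, Matrix.det_succ_row_zero, Fin.sum_univ_succ, Fin.succAbove]
  norm_num

lemma nefSlice_eq_union :
    {x : Fin (3 + 1) → ℝ | x ∈ NefCone 3 ∧
      0 ≤ interR (antiKR 3) x ∧ interR (antiKR 3) x ≤ 1} =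
      Matrix.toLin' chartPos ⁻¹' orderSimplex 4 ∪ Matrix.toLin' chartNeg ⁻¹' orderSimplex 4 := by
  ext x
  simp only [nefCone_three, interR_three, mem_union, mem_preimage, mem_ofPred_eq,
    mem_orderSimplex_succ_iff, Fin.forall_fin_succ]
  simp only [antiKR, chartPos, chartNeg, Matrix.toLin'_apply, Matrix.mulVec, dotProduct,
    Fin.sum_univ_four, Matrix.of_apply, Matrix.cons_val', Matrix.cons_val_fin_one,
    Matrix.cons_val_zero, Matrix.cons_val_one, Matrix.cons_val, Matrix.cons_val_succ, Fin.isValue,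
    Fin.castSucc_zero, Fin.succ_zero_eq_one, Fin.castSucc_one, Fin.succ_one_eq_two,
    Fin.reduceCastSucc, Fin.reduceSucc, Fin.reduceLast, Fin.reduceEq, Nat.reduceAdd, ↓reduceIte,
    one_ne_zero, IsEmpty.forall_iff, and_true]
  constructor
  · rintro ⟨⟨h1, h2, h3, h12, h13, h23⟩, hK0, hK1⟩
    rcases le_total 0 (x 0 + x 1 + x 2 + x 3) with hσ | hσ
    · exact Or.inl ⟨by linarith, ⟨by linarith, by linarith, by linarith⟩, by linarith⟩
    · exact Or.inr ⟨by linarith, ⟨by linarith, by linarith, by linarith⟩, by linarith⟩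
  · rintro (⟨h0, ⟨h1, h2, h3⟩, hK1⟩ | ⟨h0, ⟨h1, h2, h3⟩, hK1⟩) <;>
      exact ⟨⟨by linarith, by linarith, by linarith, by linarith, by linarith, by linarith⟩,
        by linarith, by linarith⟩

lemma aedisjoint_chartPos_chartNeg :
    AEDisjoint volume (Matrix.toLin' chartPos ⁻¹' orderSimplex 4)
      (Matrix.toLin' chartNeg ⁻¹' orderSimplex 4) := by
  refine measure_mono_null (fun x ⟨hP, hN⟩ => ?_) volume_setOf_sum_eq_zero
  have hP0 := (mem_orderSimplex_succ_iff.1 hP).1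
  have hN0 := (mem_orderSimplex_succ_iff.1 hN).1
  simp only [chartPos, chartNeg, Matrix.toLin'_apply, Matrix.mulVec, dotProduct, Matrix.of_apply,
    Matrix.cons_val', Matrix.cons_val_fin_one, Matrix.cons_val_zero, Fin.sum_univ_four,
    Matrix.cons_val_one, Matrix.cons_val, mem_ofPred_eq] at hP0 hN0 ⊢
  linarith

theorem alpha_S3 :
    4 * (volume {x : Fin (3 + 1) → ℝ | x ∈ NefCone 3 ∧
      0 ≤ interR (antiKR 3) x ∧ interR (antiKR 3) x ≤ 1}).toReal = 1 / 72 := by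
  have hNeg : NullMeasurableSet (Matrix.toLin' chartNeg ⁻¹' orderSimplex 4) :=
    (measurableSet_orderSimplex.preimage
      (Matrix.toLin' chartNeg).continuous_of_finiteDimensional.measurable).nullMeasurableSet
  rw [nefSlice_eq_union, measure_union₀ hNeg aedisjoint_chartPos_chartNeg,
    volume_preimage_orderSimplex _ (by simp [det_chartPos]),
    volume_preimage_orderSimplex _ (by simp [det_chartNeg]), det_chartPos, det_chartNeg]
  norm_num [Nat.factorial, ← two_mul, ENNReal.toReal_mul, ENNReal.toReal_inv]
end
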